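/- arXiv:2010.08812 — 9 statements merged into one kernel-verified Lean document; each statement's English description precedes it below -/
import Mathlib

section
/- If A is a subset of a perfect Polish space X such that for every sequence {K_n : n ∈ ℕ} of pairwise disjoint Cantor sets (homeomorphic copies of 2^ℕ) in X there exist closed sets F_n in X with A ⊆ ⋃_n F_n and K_m ⊄ F_n for all m, n, then A is an s₀-set: every perfect subset P of X contains a Cantor set K with K ∩ A = ∅. -/
open Set

/-- An `Fσ` set: a countable union of closed sets. -/
def IsFsigma {X : Type*} [TopologicalSpace X] (F : Set X) : Prop :=
  ∃ s : ℕ → Set X, (∀ n, IsClosed (s n)) ∧ F = ⋃ n, s n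

/-- A perfect set in the classical sense: nonempty, closed, without isolated points. -/
def PerfectSet {X : Type*} [TopologicalSpace X] (P : Set X) : Prop :=
  Perfect P ∧ P.Nonempty

/-- A Cantor set: a subset homeomorphic to the Cantor space `2^ℕ`
(hence nonempty and compact). -/
def IsCantorSet {X : Type*} [TopologicalSpace X] (K : Set X) : Prop :=
  Nonempty ((ℕ → Bool) ≃ₜ K)

open Function Topology

/-! The perfect set `P` is itself a perfect Polish space. It carries a sequence of pairwise
disjoint nowhere dense Cantor sets such that every nonempty open subset of `P` contains one of
them. Applied to this sequence, the hypothesis yields closed sets `F n` covering `A` none of which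
contains a member of the sequence, so each `F n ∩ P` is nowhere dense in `P` and `A ∩ P` is
meagre in `P`. Finally, in a perfect Polish space the complement of a meagre set contains a dense
`Gδ` set, which is uncountable and Borel, hence contains a Cantor set. -/

lemma isCantorSet_range {X : Type*} [TopologicalSpace X] [T2Space X] {f : (ℕ → Bool) → X}
    (hf : Continuous f) (hinj : Injective f) : IsCantorSet (range f) :=
  ⟨(hf.isClosedEmbedding hinj).isEmbedding.toHomeomorph⟩

lemma IsCantorSet.image {X Y : Type*} [TopologicalSpace X] [TopologicalSpace Y] {f : X → Y}
    (hf : IsEmbedding f) {K : Set X} (hK : IsCantorSet K) : IsCantorSet (f '' K) :=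
  let ⟨e⟩ := hK
  ⟨e.trans (hf.homeomorphImage K)⟩

lemma Perfect.perfectSpace {X : Type*} [TopologicalSpace X] {P : Set X} (hP : Perfect P) :
    PerfectSpace P := by
  refine ⟨fun x _ => accPt_iff_nhds.2 fun U hU => ?_⟩
  obtain ⟨V, hV, hVU⟩ := (mem_nhds_subtype _ _ _).1 hU
  obtain ⟨y, ⟨hyV, hyP⟩, hyx⟩ := accPt_iff_nhds.1 (hP.acc _ x.2) V hV
  exact ⟨⟨y, hyP⟩, ⟨hVU hyV, trivial⟩, fun h => hyx (congrArg Subtype.val h)⟩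

lemma Set.Countable.isMeagre {X : Type*} [TopologicalSpace X] [T1Space X] [PerfectSpace X]
    {s : Set X} (hs : s.Countable) : IsMeagre s := by
  rw [← biUnion_of_singleton s]
  exact isMeagre_biUnion hs fun x _ =>
    (isClosed_singleton.isNowhereDense_iff.2 (interior_singleton x)).isMeagre

theorem IsOpen.exists_nat_bool_injection_diff {X : Type*} [TopologicalSpace X] [PolishSpace X]
    [PerfectSpace X] {U s : Set X} (hU : IsOpen U) (hne : U.Nonempty) (hs : IsMeagre s) :
    ∃ f : (ℕ → Bool) → X, range f ⊆ U \ s ∧ Continuous f ∧ Injective f := by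
  obtain ⟨t, hts, htG, htd⟩ := mem_residual.1 hs
  have htc : IsMeagre tᶜ := by rw [IsMeagre, compl_compl]; exact residual_of_dense_Gδ htG htd
  have hunc : ¬(U ∩ t).Countable := fun hc =>
    not_isMeagre_of_isOpen hU hne <| (hc.isMeagre.union htc).mono fun x hx =>
      (em (x ∈ t)).imp (fun hxt => ⟨hx, hxt⟩) id
  -- The Borel set `U ∩ t` is closed in some finer Polish topology `τ`.
  let := borel X
  have : BorelSpace X := ⟨rfl⟩
  obtain ⟨τ, hτ, hτPolish, hclosed, -⟩ := (hU.isGδ.inter htG).measurableSet.isClopenable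
  obtain ⟨f, hfUt, hfc, hfi⟩ :=
    @IsClosed.exists_nat_bool_injection_of_not_countable X τ hτPolish _ hclosed hunc
  exact ⟨f, fun x hx => ⟨(hfUt hx).1, hts (hfUt hx).2⟩, continuous_le_rng hτ hfc, hfi⟩

theorem IsOpen.exists_isCantorSet_isMeagre_subset_diff {X : Type*} [TopologicalSpace X]
    [PolishSpace X] [PerfectSpace X] {U s : Set X} (hU : IsOpen U) (hne : U.Nonempty)
    (hs : IsMeagre s) : ∃ K, IsCantorSet K ∧ IsMeagre K ∧ K ⊆ U \ s := by
  obtain ⟨D, hDc, hDd⟩ := TopologicalSpace.exists_countable_dense X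
  obtain ⟨f, hfs, hfc, hfi⟩ := hU.exists_nat_bool_injection_diff hne (hs.union hDc.isMeagre)
  have hDf : D ⊆ (range f)ᶜ := fun y hyD hyf => (hfs hyf).2 (Or.inr hyD)
  refine ⟨range f, isCantorSet_range hfc hfi, ?_,
    fun y hy => ⟨(hfs hy).1, fun hys => (hfs hy).2 (Or.inl hys)⟩⟩
  exact ((isCompact_range hfc).isClosed.isNowhereDense_iff.2
    (interior_eq_empty_iff_dense_compl.2 (hDd.mono hDf))).isMeagre

theorem exists_pairwise_disjoint_isCantorSet_subset_of_isOpen (Y : Type*) [TopologicalSpace Y]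
    [PolishSpace Y] [PerfectSpace Y] [Nonempty Y] :
    ∃ K : ℕ → Set Y, (∀ n, IsCantorSet (K n)) ∧ Pairwise (Disjoint on K) ∧
      ∀ U, IsOpen U → U.Nonempty → ∃ n, K n ⊆ U := by
  obtain ⟨B, hBc, hB₀, hB⟩ := TopologicalSpace.exists_countable_basis Y
  have hBne : B.Nonempty :=
    let ⟨V, hV, _⟩ := hB.exists_subset_of_mem_open (mem_univ (Classical.arbitrary Y)) isOpen_univ
    ⟨V, hV⟩
  obtain ⟨b, rfl⟩ := hBc.exists_eq_range hBne
  have hbne (n : ℕ) : (b n).Nonempty :=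
    nonempty_iff_ne_empty.2 fun h => hB₀ (h ▸ mem_range_self n)
  -- `K n` is chosen in `b n` off the meagre union `N n` of the previous ones.
  choose K hKc hKm hKsub using fun n (N : {N : Set Y // IsMeagre N}) =>
    (hB.isOpen (mem_range_self n)).exists_isCantorSet_isMeagre_subset_diff (hbne n) N.2
  let N : ℕ → {N : Set Y // IsMeagre N} := fun n =>
    Nat.rec ⟨∅, IsMeagre.empty⟩ (fun k N => ⟨N.1 ∪ K k N, N.2.union (hKm k N)⟩) n
  have hNmono : Monotone fun n => (N n).1 := monotone_nat_of_le_succ fun n => subset_union_left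
  refine ⟨fun n => K n (N n), fun n => hKc n _, ?_, ?_⟩
  · refine (pairwise_disjoint_on _).2 fun m n hmn => Set.disjoint_left.2 fun y hym hyn => ?_
    exact (hKsub n _ hyn).2 (hNmono hmn (subset_union_right hym))
  · rintro U hU ⟨y, hy⟩
    obtain ⟨V, ⟨n, rfl⟩, -, hVU⟩ := hB.exists_subset_of_mem_open hy hU
    exact ⟨n, (hKsub n _).trans (sdiff_subset.trans hVU)⟩

lemma IsClosed.isNowhereDense_of_forall_not_subset {X : Type*} [TopologicalSpace X]
    {K : ℕ → Set X} (hK : ∀ U, IsOpen U → U.Nonempty → ∃ n, K n ⊆ U) {G : Set X}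
    (hG : IsClosed G) (hKG : ∀ n, ¬K n ⊆ G) : IsNowhereDense G := by
  rw [hG.isNowhereDense_iff, ← not_nonempty_iff_eq_empty]
  intro hne
  obtain ⟨n, hn⟩ := hK _ isOpen_interior hne
  exact hKG n (hn.trans interior_subset)

theorem stmt0_general {X : Type*} [TopologicalSpace X] [PolishSpace X] (A : Set X)
    (h : ∀ K : ℕ → Set X, (∀ n, IsCantorSet (K n)) → Pairwise (Function.onFun Disjoint K) →
      ∃ F : ℕ → Set X, (∀ n, IsClosed (F n)) ∧ A ⊆ ⋃ n, F n ∧ ∀ m n, ¬ K m ⊆ F n) :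
    ∀ P : Set X, PerfectSet P → ∃ K : Set X, K ⊆ P ∧ IsCantorSet K ∧ K ∩ A = ∅ := by
  rintro P ⟨hP, x, hx⟩
  have := hP.closed.polishSpace
  have := hP.perfectSpace
  have : Nonempty P := ⟨⟨x, hx⟩⟩
  obtain ⟨K, hKc, hKd, hKU⟩ := exists_pairwise_disjoint_isCantorSet_subset_of_isOpen P
  obtain ⟨F, hFc, hAF, hKF⟩ := h (fun n => (↑) '' K n)
    (fun n => (hKc n).image IsEmbedding.subtypeVal)
    (fun m n hmn => (disjoint_image_iff Subtype.val_injective).2 (hKd hmn))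
  have hmeagre : IsMeagre (⋃ n, ((↑) ⁻¹' F n : Set P)) := isMeagre_iUnion fun n =>
    ((hFc n).preimage continuous_subtype_val).isNowhereDense_of_forall_not_subset hKU
      (fun m hm => hKF m n (image_subset_iff.2 hm)) |>.isMeagre
  obtain ⟨f, hfs, hfc, hfi⟩ := isOpen_univ.exists_nat_bool_injection_diff univ_nonempty hmeagre
  refine ⟨range ((↑) ∘ f), ?_, isCantorSet_range (continuous_subtype_val.comp hfc)
    (Subtype.val_injective.comp hfi), ?_⟩
  · rintro _ ⟨y, rfl⟩
    exact (f y).2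
  · refine eq_empty_iff_forall_notMem.2 ?_
    rintro _ ⟨⟨y, rfl⟩, hyA⟩
    obtain ⟨n, hn⟩ := mem_iUnion.1 (hAF hyA)
    exact (hfs (mem_range_self y)).2 (mem_iUnion.2 ⟨n, hn⟩)

theorem stmt0 {X : Type*} [TopologicalSpace X] [PolishSpace X]
    (hX : Perfect (Set.univ : Set X)) (A : Set X)
    (h : ∀ K : ℕ → Set X, (∀ n, IsCantorSet (K n)) → Pairwise (Function.onFun Disjoint K) →
      ∃ F : ℕ → Set X, (∀ n, IsClosed (F n)) ∧ A ⊆ ⋃ n, F n ∧ ∀ m n, ¬ K m ⊆ F n) :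
    ∀ P : Set X, PerfectSet P → ∃ K : Set X, K ⊆ P ∧ IsCantorSet K ∧ K ∩ A = ∅ :=
  stmt0_general A h
end

section
/- A subset A of a perfect Polish space X is countably perfectly meager in X if and only if for every sequence {K_n : n ∈ ℕ} of Cantor sets in X there exists an F_σ-set F in X such that A ⊆ F and K_m ⊄ F for every m. -/
/-!
A Cantor set is a perfect set in which no set containing it is meager, so the condition for
perfect sets implies the one for Cantor sets. Conversely, inside a perfect set `P` of a Polish
space choose, for each basic open `U` meeting `P`, a Cantor set in `closure (U ∩ P)`. A closed set
that is not meager in `P` contains some `U ∩ P`, hence one of these countably many Cantor sets;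
so an `Fσ` set containing none of them is meager in `P`.
-/

open Set

/-- `F` is meager relative to the subspace `P`. -/
def MeagerIn {X : Type*} [TopologicalSpace X] (F P : Set X) : Prop :=
  IsMeagre ((↑) ⁻¹' F : Set P)

/-- `A` is countably perfectly meager in `X`. -/
def CPM {X : Type*} [TopologicalSpace X] (A : Set X) : Prop :=
  ∀ P : ℕ → Set X, (∀ n, PerfectSet (P n)) →
    ∃ F : Set X, IsFsigma F ∧ A ⊆ F ∧ ∀ n, MeagerIn F (P n)

open Filter Topology

instance Pi.perfectSpace {ι α : Type*} [TopologicalSpace α] [Infinite ι] [Nontrivial α] :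
    PerfectSpace (ι → α) := by
  classical
  refine perfectSpace_iff_forall_not_isolated.mpr fun x => ?_
  choose y hy using fun i => exists_ne (x i)
  have hlim : Tendsto (fun i => Function.update x i (y i)) cofinite (𝓝 x) :=
    tendsto_pi_nhds.mpr fun k => tendsto_const_nhds.congr' <|
      (eventually_cofinite_ne k).mono fun i hi => (Function.update_of_ne (Ne.symm hi) _ _).symm
  refine (tendsto_nhdsWithin_of_tendsto_nhds_of_eventually_within _ hlim
    (Eventually.of_forall fun i => mem_compl_singleton_iff.mpr fun hxi => hy i ?_)).neBot
  simpa using congr_fun hxi i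

theorem Continuous.preperfect_range {α β : Type*} [TopologicalSpace α] [TopologicalSpace β]
    [PerfectSpace α] {f : α → β} (hf : Continuous f) (hinj : Function.Injective f) :
    Preperfect (range f) := by
  rintro _ ⟨x, rfl⟩
  simpa using (PerfectSpace.univ_preperfect x (mem_univ x)).map hf.continuousAt hinj

section CantorSet

variable {X : Type*} [TopologicalSpace X]

theorem IsCantorSet.perfectSet [T2Space X] {K : Set X} (hK : IsCantorSet K) : PerfectSet K := by
  obtain ⟨e⟩ := hK
  have hf : Continuous (Subtype.val ∘ e) := continuous_subtype_val.comp e.continuous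
  have hrange : range (Subtype.val ∘ e) = K := by
    rw [range_comp, e.range_coe, image_univ, Subtype.range_coe]
  rw [← hrange]
  exact ⟨⟨(isCompact_range hf).isClosed,
    hf.preperfect_range (Subtype.val_injective.comp e.injective)⟩, range_nonempty _⟩

theorem IsCantorSet.not_meagerIn_of_subset {K F : Set X} (hK : IsCantorSet K) (hKF : K ⊆ F) :
    ¬ MeagerIn F K := by
  obtain ⟨e⟩ := hK
  have := e.baireSpace
  have : Nonempty K := ⟨e fun _ => false⟩
  rw [MeagerIn, show ((↑) ⁻¹' F : Set K) = univ from eq_univ_of_forall fun x => hKF x.2]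
  exact not_isMeagre_of_isOpen isOpen_univ univ_nonempty

theorem IsClosed.exists_isOpen_inter_subset_of_not_meagerIn {C P : Set X} (hC : IsClosed C)
    (h : ¬ MeagerIn C P) : ∃ U, IsOpen U ∧ (U ∩ P).Nonempty ∧ U ∩ P ⊆ C := by
  have hCP : IsClosed ((↑) ⁻¹' C : Set P) := hC.preimage continuous_subtype_val
  obtain ⟨x, hx⟩ : (interior ((↑) ⁻¹' C : Set P)).Nonempty := by
    rw [nonempty_iff_ne_empty, Ne, ← hCP.isNowhereDense_iff]
    exact fun hnd => h hnd.isMeagre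
  obtain ⟨U, hU, hUC⟩ := isOpen_induced_iff.mp (isOpen_interior (s := ((↑) ⁻¹' C : Set P)))
  refine ⟨U, hU, ⟨x, show x ∈ (↑) ⁻¹' U by rwa [hUC], x.2⟩, fun y ⟨hyU, hyP⟩ => ?_⟩
  have hy : (⟨y, hyP⟩ : P) ∈ (↑) ⁻¹' U := hyU
  rw [hUC] at hy
  exact interior_subset (s := ((↑) ⁻¹' C : Set P)) hy

end CantorSet

section CompleteMetric

variable {X : Type*} [MetricSpace X] [CompleteSpace X]

theorem Perfect.exists_isCantorSet_subset {C : Set X} (hC : Perfect C) (hne : C.Nonempty) :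
    ∃ K, IsCantorSet K ∧ K ⊆ C := by
  obtain ⟨f, hfC, hfc, hfi⟩ := hC.exists_nat_bool_injection hne
  exact ⟨range f, ⟨(hfc.isClosedEmbedding hfi).toIsEmbedding.toHomeomorph⟩, hfC⟩

theorem PerfectSet.exists_seq_isCantorSet_subset_of_not_meagerIn [SecondCountableTopology X]
    {P : Set X} (hP : PerfectSet P) :
    ∃ K : ℕ → Set X, (∀ i, IsCantorSet (K i)) ∧
      ∀ C, IsClosed C → ¬ MeagerIn C P → ∃ i, K i ⊆ C := by
  obtain ⟨b, hbc, -, hb⟩ := TopologicalSpace.exists_countable_basis X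
  obtain ⟨x₀, -⟩ := hP.2
  obtain ⟨s₀, hs₀, -⟩ := hb.exists_subset_of_mem_open (mem_univ x₀) isOpen_univ
  obtain ⟨u, rfl⟩ := hbc.exists_eq_range ⟨s₀, hs₀⟩
  have hK : ∀ i, ∃ K, IsCantorSet K ∧ ((u i ∩ P).Nonempty → K ⊆ closure (u i ∩ P)) := by
    intro i
    by_cases hne : (u i ∩ P).Nonempty
    · obtain ⟨x, hxu, hxP⟩ := hne
      obtain ⟨hperf, hne'⟩ := hP.1.closure_nhds_inter x hxP hxu (hb.isOpen (mem_range_self i))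
      obtain ⟨K, hK, hKsub⟩ := hperf.exists_isCantorSet_subset hne'
      exact ⟨K, hK, fun _ => hKsub⟩
    · obtain ⟨K, hK, -⟩ := hP.1.exists_isCantorSet_subset hP.2
      exact ⟨K, hK, fun h => absurd h hne⟩
  choose K hK hKsub using hK
  refine ⟨K, hK, fun C hC hCP => ?_⟩
  obtain ⟨U, hU, ⟨x, hxU, hxP⟩, hUC⟩ := hC.exists_isOpen_inter_subset_of_not_meagerIn hCP
  obtain ⟨_, ⟨i, rfl⟩, hxi, hiU⟩ := hb.exists_subset_of_mem_open hxU hU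
  exact ⟨i, (hKsub i ⟨x, hxi, hxP⟩).trans <|
    hC.closure_subset_iff.mpr ((inter_subset_inter_left P hiU).trans hUC)⟩

end CompleteMetric

theorem stmt2_general {X : Type*} [TopologicalSpace X] [PolishSpace X]
    (A : Set X) :
    CPM A ↔
      ∀ K : ℕ → Set X, (∀ n, IsCantorSet (K n)) →
        ∃ F : Set X, IsFsigma F ∧ A ⊆ F ∧ ∀ m, ¬ K m ⊆ F := by
  constructor
  · intro hA K hK
    obtain ⟨F, hF, hAF, hmeager⟩ := hA K fun n => (hK n).perfectSet
    exact ⟨F, hF, hAF, fun m hKF => (hK m).not_meagerIn_of_subset hKF (hmeager m)⟩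
  · intro h P hP
    let := TopologicalSpace.upgradeIsCompletelyMetrizable X
    choose K hK hKC using fun n => (hP n).exists_seq_isCantorSet_subset_of_not_meagerIn
    obtain ⟨F, ⟨s, hs, rfl⟩, hAF, hF⟩ := h (fun m => K m.unpair.1 m.unpair.2) fun m => hK _ _
    refine ⟨⋃ k, s k, ⟨s, hs, rfl⟩, hAF, fun n => ?_⟩
    rw [MeagerIn, preimage_iUnion]
    refine isMeagre_iUnion fun k => by_contra fun hk => ?_
    obtain ⟨i, hi⟩ := hKC n (s k) (hs k) hk
    exact hF (Nat.pair n i) (by simpa using hi.trans (subset_iUnion s k))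

theorem stmt2 {X : Type*} [TopologicalSpace X] [PolishSpace X]
    (hX : Perfect (Set.univ : Set X)) (A : Set X) :
    CPM A ↔
      ∀ K : ℕ → Set X, (∀ n, IsCantorSet (K n)) →
        ∃ F : Set X, IsFsigma F ∧ A ⊆ F ∧ ∀ m, ¬ K m ⊆ F :=
  stmt2_general A
end

section
/- Every subset of a perfect Polish space X of cardinality less than 𝔟 is countably perfectly meager in X, where 𝔟 is the bounding number (the least cardinality of a subset of ℕ^ℕ unbounded in the eventual domination order ≤*). -/
/-!
Since `|A| < 𝔟 ≤ 𝔠` while every nonempty perfect subset of a Polish space has size `𝔠`, the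
points outside `A` are dense in each `P n`, so there is a sequence `d` avoiding `A` whose range
meets every `P n` densely. For `x ∈ A` the function `j ↦ ⌈1 / dist x (d j)⌉` controls how close
`d j` comes to `x`; fewer than `𝔟` such functions are eventually dominated by a single `g`. Then
`F = ⋃ k, (⋃ j ≥ k, ball (d j) (1 / (g j + 1)))ᶜ` is an `Fσ` set containing `A`, and each of its
pieces misses a dense open part of every `P n`, because a perfect set stays dense in itself after
removing finitely many of the points `d j`.
-/

open Set

/-- Eventual domination `f ≤* g`. -/
def EvLE (f g : ℕ → ℕ) : Prop := ∀ᶠ n in Filter.atTop, f n ≤ g n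

/-- The bounding number `𝔟`: the least cardinality of a `≤*`-unbounded family. -/
noncomputable def bNum : Cardinal :=
  sInf {c : Cardinal | ∃ S : Set (ℕ → ℕ), Cardinal.mk S = c ∧ ∀ g, ∃ f ∈ S, ¬ EvLE f g}

open Set Filter Topology Metric
open scoped Cardinal

lemma bNum_le_continuum : bNum ≤ 𝔠 := by
  refine csInf_le' ⟨univ, by simp [Cardinal.power_self_eq le_rfl], fun g => ?_⟩
  refine ⟨fun n => g n + 1, trivial, fun h => ?_⟩
  obtain ⟨n, hn⟩ := h.exists
  exact (Nat.lt_succ_self _).not_ge hn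

lemma exists_forall_evLE_of_mk_lt_bNum {S : Set (ℕ → ℕ)} (hS : #S < bNum) :
    ∃ g, ∀ f ∈ S, EvLE f g := by
  by_contra! h
  apply hS.not_ge
  exact csInf_le' ⟨S, rfl, h⟩

lemma inv_natCast_succ_le_of_natCeil_inv_le {δ : ℝ} (hδ : 0 < δ) {m : ℕ} (h : ⌈δ⁻¹⌉₊ ≤ m) :
    ((m : ℝ) + 1)⁻¹ ≤ δ := by
  refine inv_le_of_inv_le₀ hδ ((Nat.le_ceil _).trans ?_)
  exact_mod_cast h.trans (Nat.le_succ m)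

section Perfect

variable {X : Type*} [TopologicalSpace X]

lemma Preperfect.subset_closure_sdiff_finite [T1Space X] {P s F : Set X} (hP : Preperfect P)
    (hs : P ⊆ closure s) (hF : F.Finite) : P ⊆ closure (s \ F) := by
  have hPF : P ⊆ closure (P \ F) := fun x hx => by
    have hFc : Fᶜ ∈ 𝓝[≠] x := by
      simpa [compl_eq_univ_sdiff] using nhdsNE_of_nhdsNE_sdiff_finite univ_mem hF.to_subtype
    rw [mem_closure_iff_frequently]
    exact ((accPt_iff_frequently_nhdsNE.1 (hP x hx)).and_eventually hFc).filter_mono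
      nhdsWithin_le_nhds
  calc P ⊆ closure (P \ F) := hPF
    _ ⊆ closure (Fᶜ ∩ closure s) := closure_mono fun y hy => ⟨hy.2, hs hy.1⟩
    _ ⊆ closure (closure (Fᶜ ∩ s)) := closure_mono hF.isClosed.isOpen_compl.inter_closure
    _ = closure (s \ F) := by rw [closure_closure, inter_comm, sdiff_eq]

lemma Preperfect.subset_closure_inter_iUnion_ge [T1Space X] {P : Set X} (hP : Preperfect P)
    {d : ℕ → X} (hd : P ⊆ closure (P ∩ range d)) {V : ℕ → Set X} (hV : ∀ j, d j ∈ V j)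
    (k : ℕ) : P ⊆ closure (P ∩ ⋃ j ≥ k, V j) := by
  refine (hP.subset_closure_sdiff_finite hd ((finite_Iio k).image d)).trans (closure_mono ?_)
  rintro _ ⟨⟨hy, j, rfl⟩, hj⟩
  exact ⟨hy, mem_iUnion₂.2 ⟨j, not_lt.1 fun hjk => hj ⟨j, hjk, rfl⟩, hV j⟩⟩

lemma meagerIn_iUnion_compl {P : Set X} {U : ℕ → Set X} (hU : ∀ k, IsOpen (U k))
    (hUP : ∀ k, P ⊆ closure (P ∩ U k)) : MeagerIn (⋃ k, (U k)ᶜ) P := by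
  rw [MeagerIn, preimage_iUnion]
  refine isMeagre_iUnion fun k => ?_
  rw [IsMeagre, preimage_compl, compl_compl]
  refine residual_of_dense_open ((hU k).preimage continuous_subtype_val) ?_
  rw [Topology.IsInducing.subtypeVal.dense_iff]
  intro x
  simpa only [Subtype.image_preimage_coe] using hUP k x.2

end Perfect

section Polish

variable {X : Type*} [MetricSpace X] [CompleteSpace X]

lemma Perfect.nonempty_diff_of_mk_lt_continuum {C A : Set X} (hC : Perfect C)
    (hne : C.Nonempty) (hA : #A < 𝔠) : (C \ A).Nonempty := by
  by_contra! h
  obtain ⟨f, hfC, -, hf⟩ := hC.exists_nat_bool_injection hne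
  have hfA : range f ⊆ A := hfC.trans (sdiff_eq_empty.1 h)
  refine (Cardinal.mk_le_mk_of_subset hfA).not_gt ?_
  have hrange : #(range f) = 𝔠 := by simpa using Cardinal.mk_range_eq_of_injective hf
  exact hrange ▸ hA

lemma Perfect.subset_closure_diff_of_mk_lt_continuum {P A : Set X} (hP : Perfect P)
    (hA : #A < 𝔠) : P ⊆ closure (P \ A) := by
  intro x hx
  rw [mem_closure_iff_nhds]
  intro t ht
  obtain ⟨s, hs, hsc, hst⟩ := exists_mem_nhds_isClosed_subset ht
  obtain ⟨hperf, hne⟩ := hP.closure_nhds_inter x hx (mem_interior_iff_mem_nhds.2 hs) isOpen_interior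
  have hsub : closure (interior s ∩ P) ⊆ s ∩ P :=
    closure_minimal (inter_subset_inter_left _ interior_subset) (hsc.inter hP.closed)
  obtain ⟨y, hy, hyA⟩ := hperf.nonempty_diff_of_mk_lt_continuum hne hA
  exact ⟨y, hst (hsub hy).1, (hsub hy).2, hyA⟩

lemma exists_seq_notMem_dense_in_perfect [SecondCountableTopology X] {P : ℕ → Set X}
    (hP : ∀ n, PerfectSet (P n)) {A : Set X} (hA : #A < 𝔠) :
    ∃ d : ℕ → X, (∀ j, d j ∉ A) ∧ ∀ n, P n ⊆ closure (P n ∩ range d) := by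
  have hsep : ∀ n, ∃ t ⊆ P n \ A, t.Countable ∧ P n ⊆ closure t := fun n => by
    obtain ⟨t, hts, htc, hst⟩ :=
      (TopologicalSpace.IsSeparable.of_separableSpace (P n \ A)).exists_countable_dense_subset
    exact ⟨t, hts, htc, ((hP n).1.subset_closure_diff_of_mk_lt_continuum hA).trans
      (closure_minimal hst isClosed_closure)⟩
  choose t hts htc hPt using hsep
  have hne : (⋃ n, t n).Nonempty := by
    obtain ⟨x, hx⟩ := (hP 0).2
    obtain ⟨y, hy⟩ := closure_nonempty_iff.1 ⟨x, hPt 0 hx⟩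
    exact ⟨y, mem_iUnion.2 ⟨0, hy⟩⟩
  obtain ⟨d, hd⟩ := (countable_iUnion htc).exists_eq_range hne
  refine ⟨d, fun j hj => ?_, fun n => (hPt n).trans (closure_mono fun y hy => ?_)⟩
  · obtain ⟨n, hn⟩ := mem_iUnion.1 (hd ▸ mem_range_self j : d j ∈ ⋃ n, t n)
    exact (hts n hn).2 hj
  · exact ⟨(hts n hy).1, hd ▸ mem_iUnion.2 ⟨n, hy⟩⟩

end Polish

theorem stmt9_general {X : Type} [TopologicalSpace X] [PolishSpace X]
    (A : Set X) (hA : Cardinal.mk A < bNum) :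
    CPM A := by
  intro P hP
  let := TopologicalSpace.upgradeIsCompletelyMetrizable X
  obtain ⟨d, hdA, hPd⟩ := exists_seq_notMem_dense_in_perfect hP (hA.trans_le bNum_le_continuum)
  let escape : X → ℕ → ℕ := fun x j => ⌈(dist x (d j))⁻¹⌉₊
  obtain ⟨g, hg⟩ := exists_forall_evLE_of_mk_lt_bNum (Cardinal.mk_image_le.trans_lt hA :
    #(escape '' A) < bNum)
  let U : ℕ → Set X := fun k => ⋃ j ≥ k, ball (d j) ((g j + 1 : ℝ)⁻¹)
  have hU : ∀ k, IsOpen (U k) := fun k => isOpen_biUnion fun j _ => isOpen_ball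
  refine ⟨⋃ k, (U k)ᶜ, ⟨_, fun k => (hU k).isClosed_compl, rfl⟩, fun x hx => ?_,
    fun n => meagerIn_iUnion_compl hU fun k => (hP n).1.acc.subset_closure_inter_iUnion_ge
      (hPd n) (fun j => mem_ball_self (by positivity)) k⟩
  obtain ⟨k, hk⟩ := eventually_atTop.1 (hg _ (mem_image_of_mem escape hx))
  refine mem_iUnion.2 ⟨k, ?_⟩
  simp only [U, mem_compl_iff, mem_iUnion₂, not_exists, mem_ball, not_lt]
  intro j hj
  exact inv_natCast_succ_le_of_natCeil_inv_le
    (dist_pos.2 (ne_of_mem_of_not_mem hx (hdA j))) (hk j hj)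

theorem stmt9 {X : Type} [TopologicalSpace X] [PolishSpace X]
    (hX : Perfect (Set.univ : Set X)) (A : Set X) (hA : Cardinal.mk A < bNum) :
    CPM A :=
  stmt9_general A hA
end

section
/- Every subset of 2^ℕ which is perfectly meager in the transitive sense is countably perfectly meager in 2^ℕ. -/
open Set

/-- Coordinatewise addition mod 2 on `2^ℕ`. -/
def cAdd (x y : ℕ → Bool) : ℕ → Bool := fun n => xor (x n) (y n)

/-- The translate `P + t` of a set `P ⊆ 2^ℕ`. -/
def cTranslate (P : Set (ℕ → Bool)) (t : ℕ → Bool) : Set (ℕ → Bool) :=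
  (fun x => cAdd x t) '' P

/-- `A` is perfectly meager in the transitive sense. -/
def AFCprime (A : Set (ℕ → Bool)) : Prop :=
  ∀ P : Set (ℕ → Bool), PerfectSet P →
    ∃ F : Set (ℕ → Bool), IsFsigma F ∧ A ⊆ F ∧
      ∀ t : ℕ → Bool, MeagerIn F (cTranslate P t)

/-! Enumerate the portions `P n ∩ [s]` of the given perfect sets as `Q i` and pick `x i ∈ Q i`.
Translating `Q i ∩ [x i ↾ (i + 1)]` by `t i = x i + e i` moves it into the clopen set `W i` of
sequences whose first `1` is at position `i`. The `W i` are pairwise disjoint and shrink to `0`,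
so `0` together with all translated pieces is one perfect set `R`, and
`(R + t i) ∩ [x i ↾ (i + 1)]` is a nonempty open subset of the compact set `R + t i`
lying inside `Q i`. If `F = ⋃ F_j ⊇ A` is meager in every translate of `R`, then no closed `F_j`
contains a portion of any `P n`, so each `F_j ∩ P n` is nowhere dense in `P n`. -/

open Filter Topology PiNat

theorem Preperfect.image_of_injective {X Y : Type*} [TopologicalSpace X] [TopologicalSpace Y]
    {C : Set X} (hC : Preperfect C) {f : X → Y} (hf : Continuous f)
    (hinj : Function.Injective f) : Preperfect (f '' C) := by
  rintro _ ⟨x, hx, rfl⟩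
  simpa [map_principal] using (hC x hx).map hf.continuousAt hinj

theorem not_subset_of_meagerIn {X : Type*} [TopologicalSpace X] [T2Space X] {F P U : Set X}
    (hP : IsCompact P) (hF : MeagerIn F P) (hU : IsOpen U) (hUP : (U ∩ P).Nonempty) :
    ¬ U ∩ P ⊆ F := by
  intro hUF
  have : CompactSpace P := isCompact_iff_compactSpace.mp hP
  obtain ⟨a, haU, haP⟩ := hUP
  refine not_isMeagre_of_isOpen (hU.preimage continuous_subtype_val) ⟨⟨a, haP⟩, haU⟩ ?_
  exact hF.mono fun p hp => hUF ⟨hp, p.2⟩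

theorem meagerIn_iUnion_of_isClosed {X : Type*} [TopologicalSpace X] {P : Set X}
    {S : ℕ → Set X} (hS : ∀ j, IsClosed (S j))
    (h : ∀ j U, IsOpen U → (U ∩ P).Nonempty → ¬ U ∩ P ⊆ S j) :
    MeagerIn (⋃ j, S j) P := by
  rw [MeagerIn, preimage_iUnion]
  refine isMeagre_iUnion fun j => IsNowhereDense.isMeagre ?_
  rw [((hS j).preimage continuous_subtype_val).isNowhereDense_iff,
    ← not_nonempty_iff_eq_empty]
  rintro ⟨a, ha⟩
  obtain ⟨U, hU, hUeq⟩ :=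
    isOpen_induced_iff.mp (isOpen_interior (s := (Subtype.val ⁻¹' S j : Set P)))
  have hmem (p : P) : p ∈ interior (Subtype.val ⁻¹' S j) ↔ (p : X) ∈ U := by
    rw [← hUeq]; rfl
  refine h j U hU ⟨a, (hmem a).mp ha, a.2⟩ fun p ⟨hpU, hpP⟩ => ?_
  exact interior_subset (s := (Subtype.val ⁻¹' S j : Set P)) ((hmem ⟨p, hpP⟩).mpr hpU)

section Cylinder

variable {E : ℕ → Type*} [∀ n, TopologicalSpace (E n)] [∀ n, DiscreteTopology (E n)]

theorem isClosed_cylinder (x : ∀ n, E n) (n : ℕ) : IsClosed (cylinder x n) := by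
  rw [cylinder_eq_pi]
  exact isClosed_set_pi fun _ _ => isClosed_discrete _

theorem exists_cylinder_subset {U : Set (∀ n, E n)} (hU : IsOpen U) {x : ∀ n, E n}
    (hx : x ∈ U) : ∃ n, cylinder x n ⊆ U := by
  obtain ⟨_, ⟨y, n, rfl⟩, hxy, hyU⟩ :=
    (isTopologicalBasis_cylinders E).exists_subset_of_mem_open hx hU
  exact ⟨n, mem_cylinder_iff_eq.mp hxy ▸ hyU⟩

end Cylinder

section Translation

theorem cAdd_cAdd_cancel_right (x t : ℕ → Bool) : cAdd (cAdd x t) t = x := by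
  funext n
  simp [cAdd]

theorem cAdd_cAdd_cancel_left (x t : ℕ → Bool) : cAdd x (cAdd x t) = t := by
  funext n
  simp [cAdd]

theorem continuous_cAdd_right (t : ℕ → Bool) : Continuous (cAdd · t) :=
  continuous_pi fun n =>
    (continuous_of_discreteTopology (f := fun b => xor b (t n))).comp (continuous_apply n)

theorem cAdd_right_injective (t : ℕ → Bool) : Function.Injective (cAdd · t) :=
  Function.LeftInverse.injective (g := (cAdd · t)) fun x => cAdd_cAdd_cancel_right x t

theorem cTranslate_eq_preimage (P : Set (ℕ → Bool)) (t : ℕ → Bool) :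
    cTranslate P t = (cAdd · t) ⁻¹' P :=
  congrFun (Function.Involutive.image_eq_preimage_symm fun x => cAdd_cAdd_cancel_right x t) P

theorem isCompact_cTranslate {P : Set (ℕ → Bool)} (hP : IsClosed P) (t : ℕ → Bool) :
    IsCompact (cTranslate P t) :=
  hP.isCompact.image (continuous_cAdd_right t)

theorem cAdd_mem_cylinder_iff {x y t : ℕ → Bool} {n : ℕ} :
    cAdd y t ∈ cylinder (cAdd x t) n ↔ y ∈ cylinder x n := by
  simp [mem_cylinder_iff, cAdd]

end Translation

section Portions

def cylinderPortions (P : ℕ → Set (ℕ → Bool)) : Set (Set (ℕ → Bool)) :=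
  {Q | ∃ n, ∃ x ∈ P n, ∃ m, Q = P n ∩ cylinder x m}

theorem countable_cylinderPortions (P : ℕ → Set (ℕ → Bool)) :
    (cylinderPortions P).Countable := by
  refine (countable_range fun p : ℕ × ℕ × List Bool =>
    P p.1 ∩ {y | res y p.2.1 = p.2.2}).mono ?_
  rintro _ ⟨n, x, -, m, rfl⟩
  exact ⟨(n, m, res x m), by rw [cylinder_eq_res]⟩

variable {P : ℕ → Set (ℕ → Bool)}

theorem cylinderPortions_nonempty (hP : ∀ n, PerfectSet (P n)) :
    (cylinderPortions P).Nonempty :=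
  have ⟨x, hx⟩ := (hP 0).2
  ⟨_, 0, x, hx, 0, rfl⟩

theorem perfectSet_of_mem_cylinderPortions (hP : ∀ n, PerfectSet (P n)) {Q : Set (ℕ → Bool)}
    (hQ : Q ∈ cylinderPortions P) : PerfectSet Q := by
  obtain ⟨n, x, hx, m, rfl⟩ := hQ
  refine ⟨⟨(hP n).1.closed.inter (isClosed_cylinder x m), ?_⟩, x, hx, self_mem_cylinder x m⟩
  rw [inter_comm]
  exact (hP n).1.acc.open_inter (isOpen_cylinder _ x m)

end Portions

namespace TranslatedPortions

def unitSeq (i : ℕ) : ℕ → Bool := fun k => decide (k = i)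

def firstTrueAt (i : ℕ) : Set (ℕ → Bool) := cylinder (unitSeq i) (i + 1)

theorem eq_of_mem_firstTrueAt {y : ℕ → Bool} {i j : ℕ} (hi : y ∈ firstTrueAt i)
    (hj : y ∈ firstTrueAt j) : i = j := by
  simp only [firstTrueAt, mem_cylinder_iff, unitSeq] at hi hj
  by_contra hne
  rcases lt_or_gt_of_ne hne with h | h
  · simpa [hi i (by omega), h.ne] using hj i (by omega)
  · simpa [hj j (by omega), h.ne] using hi j (by omega)

theorem eq_false_of_forall_not_mem_firstTrueAt {y : ℕ → Bool} (h : ∀ i, y ∉ firstTrueAt i) :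
    y = fun _ => false := by
  by_contra hy
  have hex : ∃ k, y k = true := by simpa [funext_iff] using hy
  refine h (Nat.find hex) (mem_cylinder_iff.mpr fun k hk => ?_)
  rcases Nat.lt_succ_iff_lt_or_eq.mp hk with hk | rfl
  · simpa [unitSeq, hk.ne] using Nat.find_min hex hk
  · simpa [unitSeq] using Nat.find_spec hex

theorem unitSeq_ne_false (i : ℕ) : unitSeq i ≠ fun _ => false :=
  fun h => by simpa [unitSeq] using congrFun h i

theorem tendsto_unitSeq : Tendsto unitSeq atTop (𝓝 fun _ => false) := by
  refine tendsto_pi_nhds.2 fun k => ?_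
  rw [nhds_discrete, tendsto_pure]
  filter_upwards [eventually_gt_atTop k] with i hi
  simp [unitSeq, hi.ne]

variable (Q : ℕ → Set (ℕ → Bool)) (x : ℕ → ℕ → Bool)

def shift (i : ℕ) : ℕ → Bool := cAdd (x i) (unitSeq i)

def piece (i : ℕ) : Set (ℕ → Bool) := cTranslate (cylinder (x i) (i + 1) ∩ Q i) (shift x i)

/-- The set `{0} ∪ ⋃ i, piece Q x i`, written as an intersection of closed sets. -/
def glued : Set (ℕ → Bool) := ⋂ i, (firstTrueAt i)ᶜ ∪ piece Q x i

variable {Q x}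

theorem cAdd_shift (i : ℕ) : cAdd (x i) (shift x i) = unitSeq i :=
  cAdd_cAdd_cancel_left _ _

theorem unitSeq_mem_piece {i : ℕ} (hx : x i ∈ Q i) : unitSeq i ∈ piece Q x i :=
  ⟨x i, ⟨self_mem_cylinder _ _, hx⟩, cAdd_shift i⟩

theorem piece_subset_firstTrueAt (i : ℕ) : piece Q x i ⊆ firstTrueAt i := by
  rintro _ ⟨d, ⟨hd, -⟩, rfl⟩
  rw [firstTrueAt, ← cAdd_shift i]
  exact cAdd_mem_cylinder_iff.mpr hd

theorem piece_subset_glued (i : ℕ) : piece Q x i ⊆ glued Q x := by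
  refine fun y hy => mem_iInter.2 fun j => or_iff_not_imp_left.2 fun hj => ?_
  rwa [← eq_of_mem_firstTrueAt (piece_subset_firstTrueAt i hy) (not_not.1 hj)]

theorem mem_piece_of_mem_glued {y : ℕ → Bool} {i : ℕ} (hy : y ∈ glued Q x)
    (hi : y ∈ firstTrueAt i) : y ∈ piece Q x i :=
  (mem_iInter.1 hy i).resolve_left (not_not_intro hi)

theorem isClosed_glued (hQ : ∀ i, IsClosed (Q i)) : IsClosed (glued Q x) := by
  refine isClosed_iInter fun i => (isOpen_cylinder _ _ _).isClosed_compl.union ?_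
  rw [piece, cTranslate_eq_preimage]
  exact ((isClosed_cylinder _ _).inter (hQ i)).preimage (continuous_cAdd_right _)

theorem preperfect_piece {i : ℕ} (hQ : Preperfect (Q i)) : Preperfect (piece Q x i) :=
  (hQ.open_inter (isOpen_cylinder _ _ _)).image_of_injective (continuous_cAdd_right _)
    (cAdd_right_injective _)

theorem perfect_glued (hQ : ∀ i, Perfect (Q i)) (hx : ∀ i, x i ∈ Q i) :
    Perfect (glued Q x) := by
  refine ⟨isClosed_glued fun i => (hQ i).closed, fun y hy => ?_⟩
  by_cases h : ∃ i, y ∈ firstTrueAt i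
  · obtain ⟨i, hi⟩ := h
    exact (preperfect_piece (hQ i).acc y (mem_piece_of_mem_glued hy hi)).mono
      (principal_mono.2 (piece_subset_glued i))
  · rw [eq_false_of_forall_not_mem_firstTrueAt (not_exists.mp h), accPt_iff_frequently]
    exact tendsto_unitSeq.frequently (Frequently.of_forall fun i =>
      ⟨unitSeq_ne_false i, piece_subset_glued i (unitSeq_mem_piece (hx i))⟩)

theorem mem_cTranslate_glued (hx : ∀ i, x i ∈ Q i) (i : ℕ) :
    x i ∈ cTranslate (glued Q x) (shift x i) :=
  ⟨unitSeq i, piece_subset_glued i (unitSeq_mem_piece (hx i)),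
    by rw [← cAdd_shift (x := x) i]; exact cAdd_cAdd_cancel_right _ _⟩

theorem cylinder_inter_cTranslate_glued_subset (i : ℕ) :
    cylinder (x i) (i + 1) ∩ cTranslate (glued Q x) (shift x i) ⊆ Q i := by
  rintro _ ⟨hpc, p, hp, rfl⟩
  have hpi : p ∈ firstTrueAt i := by
    rw [firstTrueAt, ← cAdd_shift i, ← cAdd_cAdd_cancel_right p (shift x i)]
    exact cAdd_mem_cylinder_iff.mpr hpc
  obtain ⟨d, ⟨-, hd⟩, rfl⟩ := mem_piece_of_mem_glued hp hpi
  simpa only [cAdd_cAdd_cancel_right] using hd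

end TranslatedPortions

open TranslatedPortions in
theorem exists_perfectSet_forall_translate_inter_open_subset {Q : ℕ → Set (ℕ → Bool)}
    (hQ : ∀ i, PerfectSet (Q i)) :
    ∃ P, PerfectSet P ∧ ∃ t : ℕ → ℕ → Bool, ∀ i, ∃ U, IsOpen U ∧
      (U ∩ cTranslate P (t i)).Nonempty ∧ U ∩ cTranslate P (t i) ⊆ Q i := by
  choose x hx using fun i => (hQ i).2
  refine ⟨glued Q x, ⟨perfect_glued (fun i => (hQ i).1) hx, ?_⟩, shift x, fun i =>
    ⟨_, isOpen_cylinder _ _ _, ⟨x i, self_mem_cylinder _ _, mem_cTranslate_glued hx i⟩,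
      cylinder_inter_cTranslate_glued_subset i⟩⟩
  exact ⟨unitSeq 0, piece_subset_glued 0 (unitSeq_mem_piece (hx 0))⟩

theorem stmt11 (A : Set (ℕ → Bool)) (hA : AFCprime A) : CPM A := by
  intro P hP
  obtain ⟨Q, hQ⟩ :=
    (countable_cylinderPortions P).exists_eq_range (cylinderPortions_nonempty hP)
  obtain ⟨R, hR, t, ht⟩ := exists_perfectSet_forall_translate_inter_open_subset fun i =>
    perfectSet_of_mem_cylinderPortions hP (hQ ▸ mem_range_self i)
  obtain ⟨F, ⟨S, hS, rfl⟩, hAF, hF⟩ := hA R hR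
  refine ⟨⋃ j, S j, ⟨S, hS, rfl⟩, hAF, fun n => meagerIn_iUnion_of_isClosed hS ?_⟩
  rintro j U hU ⟨a, haU, han⟩ hUS
  obtain ⟨m, hm⟩ := exists_cylinder_subset hU haU
  obtain ⟨i, hi⟩ : P n ∩ cylinder a m ∈ range Q := hQ ▸ ⟨n, a, han, m, rfl⟩
  obtain ⟨V, hV, hVne, hVQ⟩ := ht i
  refine not_subset_of_meagerIn (isCompact_cTranslate hR.1.closed (t i)) (hF (t i)) hV hVne ?_
  calc V ∩ cTranslate R (t i) ⊆ Q i := hVQ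
    _ = P n ∩ cylinder a m := hi
    _ ⊆ S j := fun y ⟨hyn, hym⟩ => hUS ⟨hm hym, hyn⟩
    _ ⊆ ⋃ j, S j := subset_iUnion S j
end

section
/- Let T ⊆ 2^ℕ have cardinality 2^{ℵ₀}, and let P be a dense G_δ subset of 2^ℕ. Then there exists a function φ : T → P whose graph H = {(t, φ(t)) : t ∈ T} ⊆ T × P has the property that every F_σ-set F in 2^ℕ × 2^ℕ containing H also contains {t} × V for some t ∈ T and some nonempty open set V ⊆ 2^ℕ. -/
open Set

/-! There are only `𝔠` Fσ subsets of the plane, so they can be enumerated by `T`. Choose `φ t ∈ P`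
outside the `t`-th Fσ set `F_t` whenever possible; then an Fσ set `F = F_t` containing the graph
contains the whole fibre `{t} × P`. The section of `F` at `t` is then an Fσ set containing the
dense Gδ set `P`, which is not meagre in the Baire space `2^ℕ`; since an Fσ set with empty
interior is meagre, the section has nonempty interior. -/

open Cardinal TopologicalSpace

section Fsigma

variable {X Y : Type*} [TopologicalSpace X] [TopologicalSpace Y]

lemma isFsigma_empty : IsFsigma (∅ : Set X) :=
  ⟨fun _ => ∅, fun _ => isClosed_empty, iUnion_empty.symm⟩

lemma IsFsigma.preimage {F : Set Y} (hF : IsFsigma F) {f : X → Y} (hf : Continuous f) :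
    IsFsigma (f ⁻¹' F) := by
  obtain ⟨s, hs, rfl⟩ := hF
  exact ⟨fun n => f ⁻¹' s n, fun n => (hs n).preimage hf, preimage_iUnion⟩

lemma IsFsigma.measurableSet [MeasurableSpace X] [OpensMeasurableSpace X] {F : Set X}
    (hF : IsFsigma F) : MeasurableSet F := by
  obtain ⟨s, hs, rfl⟩ := hF
  exact .iUnion fun n => (hs n).measurableSet

lemma IsFsigma.nonempty_interior_of_not_isMeagre {F : Set X} (hF : IsFsigma F)
    (hF' : ¬ IsMeagre F) : (interior F).Nonempty := by
  obtain ⟨s, hs, rfl⟩ := hF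
  contrapose! hF'
  refine isMeagre_iUnion fun n => IsNowhereDense.isMeagre ?_
  rw [(hs n).isNowhereDense_iff]
  exact subset_empty_iff.mp (hF' ▸ interior_mono (subset_iUnion s n))

lemma card_isFsigma_le_continuum [SecondCountableTopology X] :
    #{F : Set X // IsFsigma F} ≤ 𝔠 := by
  borelize X
  obtain ⟨b, hbc, -, hb⟩ := exists_countable_basis X
  have hBorel : #{F : Set X // MeasurableSet F} ≤ 𝔠 := by
    rw [BorelSpace.measurable_eq (α := X), hb.borel_eq_generateFrom]
    exact MeasurableSpace.cardinal_measurableSet_le_continuum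
      (hbc.le_aleph0.trans aleph0_le_continuum)
  refine le_trans (mk_le_of_injective (f := fun F => ⟨F.1, F.2.measurableSet⟩) ?_) hBorel
  exact fun F G h => Subtype.ext (congrArg Subtype.val h :)

lemma IsFsigma.exists_singleton_prod_subset {F : Set (X × Y)} (hF : IsFsigma F) {P : Set Y}
    (hP : ¬ IsMeagre P) {t : X} (hsub : P ⊆ Prod.mk t ⁻¹' F) :
    ∃ V : Set Y, IsOpen V ∧ V.Nonempty ∧ {t} ×ˢ V ⊆ F := by
  have hfibre : IsFsigma (Prod.mk t ⁻¹' F) := hF.preimage (Continuous.prodMk_right t)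
  refine ⟨_, isOpen_interior, hfibre.nonempty_interior_of_not_isMeagre fun h => hP (h.mono hsub),
    ?_⟩
  rw [singleton_prod, image_subset_iff]
  exact interior_subset

end Fsigma

lemma Set.Nonempty.exists_mem_imp_subset {α : Type*} {s : Set α} (hs : s.Nonempty) (t : Set α) :
    ∃ y ∈ s, y ∈ t → s ⊆ t := by
  by_cases h : s ⊆ t
  · exact ⟨_, hs.some_mem, fun _ => h⟩
  · obtain ⟨y, hy, hyt⟩ := not_subset.1 h
    exact ⟨y, hy, fun h' => absurd h' hyt⟩

theorem stmt12 (T : Set (ℕ → Bool)) (hT : Cardinal.mk T = Cardinal.continuum)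
    (P : Set (ℕ → Bool)) (hP : IsGδ P) (hPd : Dense P) :
    ∃ φ : T → (ℕ → Bool), (∀ t, φ t ∈ P) ∧
      ∀ F : Set ((ℕ → Bool) × (ℕ → Bool)), IsFsigma F →
        {p : (ℕ → Bool) × (ℕ → Bool) | ∃ t : T, p = (↑t, φ t)} ⊆ F →
        ∃ t ∈ T, ∃ V : Set (ℕ → Bool), IsOpen V ∧ V.Nonempty ∧ {t} ×ˢ V ⊆ F := by
  have hcard : #{F : Set ((ℕ → Bool) × (ℕ → Bool)) // IsFsigma F} ≤ #T :=
    hT ▸ card_isFsigma_le_continuum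
  obtain ⟨e, he⟩ := Function.exists_surjective_iff.2
    ⟨⟨fun _ => ⟨∅, isFsigma_empty⟩⟩, (le_def _ _).1 hcard⟩
  choose φ hφP hφ using fun t : T =>
    hPd.nonempty.exists_mem_imp_subset (Prod.mk (t : ℕ → Bool) ⁻¹' (e t).1)
  refine ⟨φ, hφP, fun F hF hsub => ?_⟩
  obtain ⟨t, ht⟩ := he ⟨F, hF⟩
  have hfibre : P ⊆ Prod.mk (t : ℕ → Bool) ⁻¹' F := by
    have h := hφ t
    rw [ht] at h
    exact h (hsub ⟨t, rfl⟩)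
  exact ⟨t, t.2, hF.exists_singleton_prod_subset (not_isMeagre_of_isGδ_of_dense hP hPd) hfibre⟩
end

section
/- Let C_0, C_1, ... be pairwise disjoint meager Cantor sets in 2^ℕ such that each nonempty open set contains some C_n, and let P = 2^ℕ \ ⋃_n C_n. Define the equivalence relation ∼ on 2^ℕ × 2^ℕ whose classes are N_{x|n} × {y} when y ∈ C_n (where N_s is the basic clopen set of sequences extending s), and singletons {(x,y)} when y ∈ P. Then the quotient space K = (2^ℕ × 2^ℕ)/∼ is homeomorphic to 2^ℕ. -/
open Set

/-!
Images in `K` of rectangles `N_s × N_t` whose `N_t` misses `C 0, …, C (|s| - 1)` are saturated,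
hence clopen. There are countably many of them, and since the `C n` are closed and pairwise
disjoint they separate the points of `K`, so the compact space `K` embeds onto a closed subset of
`2^ℕ`. This subset is perfect because `y ↦ [(x, y)]` maps `2^ℕ` injectively and continuously into
`K`. Finally, a nonempty perfect closed `D ⊆ 2^ℕ` is homeomorphic to `2^ℕ`: split `D` at the first
coordinate on which it is not constant and iterate; a binary sequence picks a nested sequence of
halves, whose intersection is a single point.
-/

open Filter PiNat

lemma PerfectSet.nontrivial {X : Type*} [TopologicalSpace X] {A : Set X} (hA : PerfectSet A) :
    A.Nontrivial := by
  obtain ⟨x, hx⟩ := hA.2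
  obtain ⟨y, hy, hyx⟩ := accPt_iff_nhds.1 (hA.1.acc x hx) univ univ_mem
  exact ⟨y, hy.2, x, hx, hyx⟩

noncomputable def splitIndex (A : Set (ℕ → Bool)) : ℕ :=
  sInf {k | ∃ z ∈ A, ∃ w ∈ A, z k ≠ w k}

def splitHalf (A : Set (ℕ → Bool)) (b : Bool) : Set (ℕ → Bool) :=
  A ∩ {z | z (splitIndex A) = b}

lemma splitHalf_subset (A : Set (ℕ → Bool)) (b : Bool) : splitHalf A b ⊆ A := inter_subset_left

lemma PerfectSet.exists_apply_splitIndex_ne {A : Set (ℕ → Bool)} (hA : PerfectSet A) :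
    ∃ z ∈ A, ∃ w ∈ A, z (splitIndex A) ≠ w (splitIndex A) := by
  obtain ⟨z, hz, w, hw, hzw⟩ := hA.nontrivial
  obtain ⟨k, hk⟩ := Function.ne_iff.1 hzw
  exact Nat.sInf_mem (s := {k | ∃ z ∈ A, ∃ w ∈ A, z k ≠ w k}) ⟨k, z, hz, w, hw, hk⟩

lemma apply_eq_of_lt_splitIndex {A : Set (ℕ → Bool)} {z w : ℕ → Bool} (hz : z ∈ A) (hw : w ∈ A)
    {j : ℕ} (hj : j < splitIndex A) : z j = w j := by
  by_contra h
  exact Nat.notMem_of_lt_sInf hj ⟨z, hz, w, hw, h⟩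

lemma apply_eq_of_mem_splitHalf {A : Set (ℕ → Bool)} {b : Bool} {z w : ℕ → Bool}
    (hz : z ∈ splitHalf A b) (hw : w ∈ splitHalf A b) {j : ℕ} (hj : j ≤ splitIndex A) :
    z j = w j := by
  rcases hj.lt_or_eq with hj | rfl
  · exact apply_eq_of_lt_splitIndex hz.1 hw.1 hj
  · exact hz.2.trans hw.2.symm

lemma PerfectSet.perfectSet_splitHalf {A : Set (ℕ → Bool)} (hA : PerfectSet A) (b : Bool) :
    PerfectSet (splitHalf A b) := by
  have hclopen : IsClopen {z : ℕ → Bool | z (splitIndex A) = b} :=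
    (isClopen_discrete {b}).preimage (continuous_apply (splitIndex A))
  refine ⟨⟨hA.1.closed.inter hclopen.isClosed, ?_⟩, ?_⟩
  · rw [_root_.splitHalf, inter_comm]
    exact hA.1.acc.open_inter hclopen.isOpen
  · obtain ⟨z, hz, w, hw, hzw⟩ := hA.exists_apply_splitIndex_ne
    by_cases h : z (splitIndex A) = b
    · exact ⟨z, hz, h⟩
    · exact ⟨w, hw, by cases b <;> simp_all⟩

lemma PerfectSet.splitIndex_lt_splitIndex_splitHalf {A : Set (ℕ → Bool)} (hA : PerfectSet A)
    (b : Bool) : splitIndex A < splitIndex (splitHalf A b) := by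
  obtain ⟨z, hz, w, hw, hzw⟩ := (hA.perfectSet_splitHalf b).exists_apply_splitIndex_ne
  by_contra! h
  exact hzw (apply_eq_of_mem_splitHalf hz hw h)

def splitNest (D : Set (ℕ → Bool)) (x : ℕ → Bool) : ℕ → Set (ℕ → Bool)
  | 0 => D
  | n + 1 => splitHalf (splitNest D x n) (x n)

section

variable {D : Set (ℕ → Bool)}

lemma PerfectSet.perfectSet_splitNest (hD : PerfectSet D) (x : ℕ → Bool) :
    ∀ n, PerfectSet (splitNest D x n)
  | 0 => hD
  | n + 1 => (hD.perfectSet_splitNest x n).perfectSet_splitHalf (x n)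

lemma splitNest_congr {x y : ℕ → Bool} {n : ℕ} (h : y ∈ cylinder x n) :
    splitNest D y n = splitNest D x n := by
  induction n with
  | zero => rfl
  | succ n ih =>
    rw [splitNest, splitNest, ih (cylinder_anti x n.le_succ h), h n n.lt_succ_self]

lemma PerfectSet.le_splitIndex_splitNest (hD : PerfectSet D) (x : ℕ → Bool) :
    ∀ n, n ≤ splitIndex (splitNest D x n)
  | 0 => Nat.zero_le _
  | n + 1 => (hD.le_splitIndex_splitNest x n).trans_lt
      ((hD.perfectSet_splitNest x n).splitIndex_lt_splitIndex_splitHalf (x n))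

lemma PerfectSet.apply_eq_of_mem_splitNest (hD : PerfectSet D) {x z w : ℕ → Bool} {j : ℕ}
    (hz : z ∈ splitNest D x (j + 1)) (hw : w ∈ splitNest D x (j + 1)) : z j = w j :=
  apply_eq_of_mem_splitHalf hz hw (hD.le_splitIndex_splitNest x j)

lemma PerfectSet.subsingleton_iInter_splitNest (hD : PerfectSet D) (x : ℕ → Bool) :
    (⋂ n, splitNest D x n).Subsingleton := fun _ hz _ hw =>
  funext fun j => hD.apply_eq_of_mem_splitNest (mem_iInter.1 hz (j + 1)) (mem_iInter.1 hw (j + 1))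

lemma PerfectSet.nonempty_iInter_splitNest (hD : PerfectSet D) (x : ℕ → Bool) :
    (⋂ n, splitNest D x n).Nonempty :=
  IsCompact.nonempty_iInter_of_sequence_nonempty_isCompact_isClosed _
    (fun _ => splitHalf_subset _ _) (fun n => (hD.perfectSet_splitNest x n).2)
    hD.1.closed.isCompact (fun n => (hD.perfectSet_splitNest x n).1.closed)

lemma disjoint_iInter_splitNest {x y : ℕ → Bool} (hxy : x ≠ y) :
    Disjoint (⋂ n, splitNest D x n) (⋂ n, splitNest D y n) := by
  refine disjoint_left.2 fun z hzx hzy => hxy (funext fun n => ?_)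
  suffices ∀ n, y ∈ cylinder x n from (this (n + 1) n n.lt_succ_self).symm
  intro n
  induction n with
  | zero => simp
  | succ n ih =>
    have hx : z ∈ splitHalf (splitNest D x n) (x n) := mem_iInter.1 hzx (n + 1)
    have hy : z ∈ splitHalf (splitNest D x n) (y n) :=
      splitNest_congr ih ▸ mem_iInter.1 hzy (n + 1)
    intro i hi
    rcases Nat.lt_succ_iff_lt_or_eq.1 hi with hi | rfl
    · exact ih i hi
    · exact hy.2.symm.trans hx.2

lemma exists_mem_iInter_splitNest {c : ℕ → Bool} (hc : c ∈ D) :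
    ∃ x, c ∈ ⋂ n, splitNest D x n := by
  let A : ℕ → Set (ℕ → Bool) := fun n => Nat.rec D (fun _ B => splitHalf B (c (splitIndex B))) n
  let x : ℕ → Bool := fun n => c (splitIndex (A n))
  have hA : ∀ n, splitNest D x n = A n ∧ c ∈ A n := by
    intro n
    induction n with
    | zero => exact ⟨rfl, hc⟩
    | succ n ih => exact ⟨by rw [splitNest, ih.1], ih.2, rfl⟩
  exact ⟨x, mem_iInter.2 fun n => (hA n).1 ▸ (hA n).2⟩

theorem PerfectSet.nonempty_homeomorph_cantor (hD : PerfectSet D) :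
    Nonempty ((ℕ → Bool) ≃ₜ D) := by
  choose g hg using hD.nonempty_iInter_splitNest
  have hgD : ∀ x, g x ∈ D := fun x => mem_iInter.1 (hg x) 0
  have hcont : Continuous g := continuous_pi fun j => IsLocallyConstant.continuous <|
    (IsLocallyConstant.iff_eventually_eq _).2 fun x => by
      filter_upwards [(isOpen_cylinder _ x (j + 1)).mem_nhds (self_mem_cylinder x (j + 1))]
        with y hy
      exact hD.apply_eq_of_mem_splitNest (splitNest_congr hy ▸ mem_iInter.1 (hg y) (j + 1))
        (mem_iInter.1 (hg x) (j + 1))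
  have hinj : Function.Injective g := fun x y hxy => by
    by_contra hne
    exact (disjoint_iInter_splitNest hne).ne_of_mem (hg x) (hg y) hxy
  have hsurj : ∀ c ∈ D, ∃ x, g x = c := fun c hc => by
    obtain ⟨x, hx⟩ := exists_mem_iInter_splitNest hc
    exact ⟨x, hD.subsingleton_iInter_splitNest x (hg x) hx⟩
  exact ⟨Continuous.homeoOfEquivCompactToT2
    (f := Equiv.ofBijective (fun x => ⟨g x, hgD x⟩)
      ⟨fun x y h => hinj (congrArg Subtype.val h),
       fun c => (hsurj c c.2).imp fun _ h => Subtype.ext h⟩)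
    (hcont.subtype_mk hgD)⟩

end

lemma preperfect_range_of_injective {X Y : Type*} [TopologicalSpace X] [TopologicalSpace Y]
    [PerfectSpace X] {f : X → Y} (hf : Continuous f) (hinj : Function.Injective f) :
    Preperfect (range f) := by
  rw [preperfect_iff_nhds]
  rintro _ ⟨x, rfl⟩ U hU
  obtain ⟨y, ⟨hyU, -⟩, hyx⟩ := accPt_iff_nhds.1 (PerfectSpace.univ_preperfect x (mem_univ x)) _
    (hf.continuousAt.preimage_mem_nhds hU)
  exact ⟨f y, ⟨hyU, mem_range_self y⟩, hinj.ne hyx⟩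

lemma perfectSpace_of_forall_mem_range {X Y : Type*} [TopologicalSpace X] [TopologicalSpace Y]
    [PerfectSpace Y] (h : ∀ x : X, ∃ f : Y → X, Continuous f ∧ Function.Injective f ∧ x ∈ range f) :
    PerfectSpace X := by
  refine ⟨fun x _ => ?_⟩
  obtain ⟨f, hf, hinj, hx⟩ := h x
  exact (preperfect_range_of_injective hf hinj x hx).mono (principal_mono.2 (subset_univ _))

instance {E : ℕ → Type*} [∀ n, TopologicalSpace (E n)] [∀ n, DiscreteTopology (E n)]
    [∀ n, Nontrivial (E n)] : PerfectSpace (∀ n, E n) := by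
  refine ⟨preperfect_iff_nhds.2 fun x _ U hU => ?_⟩
  obtain ⟨_, ⟨y, n, rfl⟩, hx, hsub⟩ := (isTopologicalBasis_cylinders E).mem_nhds_iff.1 hU
  obtain ⟨e, he⟩ := exists_ne (x n)
  refine ⟨Function.update x n e, ⟨hsub ?_, mem_univ _⟩, fun h => he (by simpa using congrFun h n)⟩
  exact mem_cylinder_iff_eq.1 hx ▸ update_mem_cylinder x n e

theorem nonempty_homeomorph_cantor_of_separating_clopens {X : Type*} [TopologicalSpace X]
    [CompactSpace X] [PerfectSpace X] [Nonempty X] {S : Set (Set X)} (hS : S.Countable)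
    (hclopen : ∀ V ∈ S, IsClopen V) (hsep : ∀ p q : X, p ≠ q → ∃ V ∈ S, p ∈ V ∧ q ∉ V) :
    Nonempty (X ≃ₜ (ℕ → Bool)) := by
  obtain ⟨p, -, q, -, hpq⟩ :=
    PerfectSet.nontrivial (A := univ) ⟨PerfectSpace.univ_perfect X, univ_nonempty⟩
  obtain ⟨Q, rfl⟩ := hS.exists_eq_range ((hsep p q hpq).imp fun _ hV => hV.1)
  let φ : X → ℕ → Bool := fun x n => (Q n).boolIndicator x
  have hφ : Continuous φ := continuous_pi fun n =>
    (continuous_boolIndicator_iff_isClopen _).2 (hclopen _ (mem_range_self n))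
  have hinj : Function.Injective φ := fun x y hxy => by
    by_contra hne
    obtain ⟨_, ⟨n, rfl⟩, hx, hy⟩ := hsep x y hne
    simpa [φ, boolIndicator, hx, hy] using congrFun hxy n
  have hemb := hφ.isClosedEmbedding hinj
  obtain ⟨h⟩ := PerfectSet.nonempty_homeomorph_cantor (D := range φ)
    ⟨⟨hemb.isClosed_range, preperfect_range_of_injective hφ hinj⟩, range_nonempty φ⟩
  exact ⟨hemb.isEmbedding.toHomeomorph.trans h.symm⟩

lemma IsCantorSet.isCompact {X : Type*} [TopologicalSpace X] {K : Set X} (hK : IsCantorSet K) :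
    IsCompact K :=
  isCompact_iff_compactSpace.2 (hK.some.compactSpace)

lemma isClopen_cylinder {E : ℕ → Type*} [∀ n, TopologicalSpace (E n)]
    [∀ n, DiscreteTopology (E n)] (x : ∀ n, E n) (n : ℕ) : IsClopen (cylinder x n) :=
  ⟨cylinder_eq_pi x n ▸ isClosed_set_pi fun i _ => isClosed_discrete {x i}, isOpen_cylinder E x n⟩

lemma countable_setOf_cylinder {α : Type*} [Countable α] :
    {A : Set (ℕ → α) | ∃ x n, A = cylinder x n}.Countable :=
  (countable_range fun l : List α => {y : ℕ → α | res y l.length = l}).mono <| by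
    rintro _ ⟨x, n, rfl⟩
    exact ⟨res x n, by dsimp only; rw [res_length, cylinder_eq_res]⟩

def CollapseRel (C : ℕ → Set (ℕ → Bool)) (p q : (ℕ → Bool) × (ℕ → Bool)) : Prop :=
  p.2 = q.2 ∧ (∀ n, p.2 ∈ C n → ∀ i < n, p.1 i = q.1 i) ∧ (p.2 ∉ ⋃ n, C n → p.1 = q.1)

def rectangleImages (C : ℕ → Set (ℕ → Bool)) (s : Setoid ((ℕ → Bool) × (ℕ → Bool))) :
    Set (Set (Quotient s)) :=
  {V | ∃ a m b j, (∀ k < m, Disjoint (cylinder b j) (C k)) ∧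
    V = Quotient.mk s '' (cylinder a m ×ˢ cylinder b j)}

section

variable {C : ℕ → Set (ℕ → Bool)} {s : Setoid ((ℕ → Bool) × (ℕ → Bool))}

lemma preimage_image_mk_cylinder_prod (hs : ∀ p q, s.r p q ↔ CollapseRel C p q)
    {a : ℕ → Bool} {m : ℕ} {B : Set (ℕ → Bool)} (hB : ∀ k < m, Disjoint B (C k)) :
    Quotient.mk s ⁻¹' (Quotient.mk s '' (cylinder a m ×ˢ B)) = cylinder a m ×ˢ B := by
  refine (subset_preimage_image _ _).antisymm' ?_
  rintro p ⟨q, ⟨hqa, hqB⟩, hqp⟩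
  obtain ⟨h2, hagree, heq⟩ := (hs q p).1 (Quotient.exact hqp)
  refine ⟨fun i hi => ?_, h2 ▸ hqB⟩
  have hqp1 : q.1 i = p.1 i := by
    by_cases hq : q.2 ∈ ⋃ n, C n
    · obtain ⟨n, hn⟩ := mem_iUnion.1 hq
      exact hagree n hn i (hi.trans_le (not_lt.1 fun hnm => disjoint_left.1 (hB n hnm) hqB hn))
    · rw [heq hq]
  exact hqp1 ▸ hqa i hi

lemma isClopen_of_mem_rectangleImages (hs : ∀ p q, s.r p q ↔ CollapseRel C p q)
    {V : Set (Quotient s)} (hV : V ∈ rectangleImages C s) : IsClopen V := by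
  obtain ⟨a, m, b, j, hgood, rfl⟩ := hV
  refine isQuotientMap_quotient_mk'.isClopen_preimage.1 ?_
  change IsClopen (Quotient.mk s ⁻¹' _)
  rw [preimage_image_mk_cylinder_prod hs hgood]
  exact (isClopen_cylinder a m).prod (isClopen_cylinder b j)

lemma countable_rectangleImages : (rectangleImages C s).Countable := by
  have h := countable_setOf_cylinder (α := Bool)
  refine ((h.prod h).image fun R => Quotient.mk s '' (R.1 ×ˢ R.2)).mono ?_
  rintro _ ⟨a, m, b, j, -, rfl⟩
  exact ⟨(cylinder a m, cylinder b j), ⟨⟨a, m, rfl⟩, ⟨b, j, rfl⟩⟩, rfl⟩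

lemma exists_prefix_of_not_collapseRel (hdisj : Pairwise (Function.onFun Disjoint C))
    {a b a' b' : ℕ → Bool} (h : ¬ CollapseRel C (a, b) (a', b')) :
    ∃ m, (∀ k < m, b ∉ C k) ∧ (b = b' → ∃ i < m, a i ≠ a' i) := by
  by_cases hbb : b = b'
  · subst hbb
    simp only [CollapseRel, true_and, not_and_or, not_forall, exists_prop] at h
    rcases h with ⟨n, hn, i, hi, hai⟩ | ⟨hb, haa⟩
    · exact ⟨n, fun k hk hbk => disjoint_left.1 (hdisj hk.ne) hbk hn, fun _ => ⟨i, hi, hai⟩⟩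
    · obtain ⟨i, hi⟩ := Function.ne_iff.1 haa
      exact ⟨i + 1, fun k _ hbk => hb (mem_iUnion.2 ⟨k, hbk⟩), fun _ => ⟨i, i.lt_succ_self, hi⟩⟩
  · exact ⟨0, fun k hk => absurd hk k.not_lt_zero, fun h => absurd h hbb⟩

lemma exists_mem_rectangleImages_separating (hC : ∀ n, IsClosed (C n))
    (hdisj : Pairwise (Function.onFun Disjoint C)) (hs : ∀ p q, s.r p q ↔ CollapseRel C p q)
    {p q : Quotient s} (hpq : p ≠ q) : ∃ V ∈ rectangleImages C s, p ∈ V ∧ q ∉ V := by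
  obtain ⟨⟨a, b⟩, rfl⟩ := Quotient.exists_rep p
  obtain ⟨⟨a', b'⟩, rfl⟩ := Quotient.exists_rep q
  obtain ⟨m, hbC, hba⟩ := exists_prefix_of_not_collapseRel hdisj
    fun h => hpq (Quotient.sound ((hs _ _).2 h))
  let F := (⋃ k ∈ Finset.range m, C k) ∪ ({b'} \ {b})
  have hF : IsClosed F :=
    (isClosed_biUnion_finset fun k _ => hC k).union (finite_singleton b').sdiff.isClosed
  have hbF : b ∉ F := by simpa [F] using hbC
  obtain ⟨j, hj⟩ := exists_disjoint_cylinder hF hbF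
  have hgood : ∀ k < m, Disjoint (cylinder b j) (C k) := fun k hk =>
    (hj.mono_left (subset_union_of_subset_left
      (subset_biUnion_of_mem (u := C) (Finset.mem_range.2 hk)) _)).symm
  refine ⟨_, ⟨a, m, b, j, hgood, rfl⟩,
    mem_image_of_mem _ ⟨self_mem_cylinder a m, self_mem_cylinder b j⟩, fun hq => ?_⟩
  obtain ⟨ha', hb'⟩ : (a', b') ∈ cylinder a m ×ˢ cylinder b j := by
    rwa [← preimage_image_mk_cylinder_prod hs hgood]
  by_cases hbb : b = b'
  · obtain ⟨i, hi, hai⟩ := hba hbb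
    exact hai (ha' i hi).symm
  · exact disjoint_left.1 hj (Or.inr ⟨rfl, Ne.symm hbb⟩) hb'

lemma perfectSpace_quotient (hs : ∀ p q, s.r p q ↔ CollapseRel C p q) :
    PerfectSpace (Quotient s) :=
  perfectSpace_of_forall_mem_range fun p => by
    obtain ⟨⟨a, b⟩, rfl⟩ := Quotient.exists_rep p
    exact ⟨fun y => Quotient.mk s (a, y), continuous_quot_mk.comp (Continuous.prodMk_right a),
      fun y y' h => ((hs _ _).1 (Quotient.exact h)).1, b, rfl⟩

end

theorem stmt13_general (C : ℕ → Set (ℕ → Bool))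
    (hC : ∀ n, IsCantorSet (C n))
    (hdisj : Pairwise (Function.onFun Disjoint C))
    (s : Setoid ((ℕ → Bool) × (ℕ → Bool)))
    (hs : ∀ p q : (ℕ → Bool) × (ℕ → Bool),
      s.r p q ↔
        (p.2 = q.2 ∧ (∀ n, p.2 ∈ C n → ∀ i < n, p.1 i = q.1 i) ∧
          (p.2 ∉ ⋃ n, C n → p.1 = q.1))) :
    Nonempty (Quotient s ≃ₜ (ℕ → Bool)) := by
  have hCclosed : ∀ n, IsClosed (C n) := fun n => (hC n).isCompact.isClosed
  have := perfectSpace_quotient hs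
  exact nonempty_homeomorph_cantor_of_separating_clopens countable_rectangleImages
    (fun _ hV => isClopen_of_mem_rectangleImages hs hV)
    (fun _ _ hpq => exists_mem_rectangleImages_separating hCclosed hdisj hs hpq)

theorem stmt13 (C : ℕ → Set (ℕ → Bool))
    (hC : ∀ n, IsCantorSet (C n)) (hCm : ∀ n, IsMeagre (C n))
    (hdisj : Pairwise (Function.onFun Disjoint C))
    (hdense : ∀ U : Set (ℕ → Bool), IsOpen U → U.Nonempty → ∃ n, C n ⊆ U)
    (s : Setoid ((ℕ → Bool) × (ℕ → Bool)))
    (hs : ∀ p q : (ℕ → Bool) × (ℕ → Bool),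
      s.r p q ↔
        (p.2 = q.2 ∧ (∀ n, p.2 ∈ C n → ∀ i < n, p.1 i = q.1 i) ∧
          (p.2 ∉ ⋃ n, C n → p.1 = q.1))) :
    Nonempty (Quotient s ≃ₜ (ℕ → Bool)) :=
  stmt13_general C hC hdisj s hs
end

section
/- If A and B are countably perfectly meager sets in perfect Polish spaces X and Y respectively, then A × B is countably perfectly meager in X × Y. -/
open Set

/-!
Every perfect set `P ⊆ X × Y` has a countable family of compact uncountable subsets such that
every nonempty relatively open subset of `P` contains one of them. A compact uncountable
`K ⊆ X × Y` either has an uncountable vertical section, hence contains `{x} × D` with `D ⊆ Y`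
perfect, or has an uncountable closed projection, hence projects onto a superset of a perfect
`C ⊆ X`. Applying the hypotheses to the countably many `C`'s and `D`'s gives closed covers
`A ⊆ ⋃ E j`, `B ⊆ ⋃ G k` such that no `C` lies in an `E j` and no `D` in a `G k`. Then no `K`
lies in a rectangle `E j × G k`, so each rectangle is nowhere dense in every `P n`.
-/

open TopologicalSpace

lemma not_countable_nat_bool : ¬ Countable (ℕ → Bool) := by
  rw [← Cardinal.mk_le_aleph0_iff, not_le]
  simpa using Cardinal.cantor Cardinal.aleph0

section

variable {Z : Type*} [TopologicalSpace Z]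

lemma isFsigma_iUnion {ι : Type*} [Countable ι] {s : ι → Set Z} (hs : ∀ i, IsClosed (s i)) :
    IsFsigma (⋃ i, s i) := by
  rcases isEmpty_or_nonempty ι with hι | hι
  · exact ⟨fun _ => ∅, fun _ => isClosed_empty, by simp⟩
  · obtain ⟨f, hf⟩ := exists_surjective_nat ι
    exact ⟨s ∘ f, fun n => hs (f n), (hf.iUnion_comp s).symm⟩

lemma meagerIn_iUnion {ι : Type*} [Countable ι] {F : ι → Set Z} {P : Set Z}
    (hF : ∀ i, MeagerIn (F i) P) : MeagerIn (⋃ i, F i) P := by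
  unfold MeagerIn
  rw [preimage_iUnion]
  exact isMeagre_iUnion hF

lemma meagerIn_of_isClosed_of_forall_not_subset {F P : Set Z} {𝒦 : Set (Set Z)}
    (hF : IsClosed F) (h𝒦 : ∀ U, IsOpen U → (U ∩ P).Nonempty → ∃ K ∈ 𝒦, K ⊆ U ∩ P)
    (hF𝒦 : ∀ K ∈ 𝒦, ¬ K ⊆ F) : MeagerIn F P := by
  refine IsNowhereDense.isMeagre <| (hF.preimage continuous_subtype_val).isNowhereDense_iff.2 ?_
  refine eq_empty_of_forall_notMem fun z hz => ?_
  obtain ⟨V, hVF, hVo, hzV⟩ := mem_interior.1 hz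
  obtain ⟨U, hU, rfl⟩ := isOpen_induced_iff.1 hVo
  obtain ⟨K, hK, hKUP⟩ := h𝒦 U hU ⟨z, hzV, z.2⟩
  exact hF𝒦 K hK fun x hx => hVF (a := ⟨x, (hKUP hx).2⟩) (hKUP hx).1

lemma PerfectSet.not_meagerIn_of_subset [PolishSpace Z] {P F : Set Z} (hP : PerfectSet P)
    (hPF : P ⊆ F) : ¬ MeagerIn F P := by
  have := hP.1.closed.polishSpace
  have := hP.2.to_subtype
  have hF : ((↑) ⁻¹' F : Set P) = univ := eq_univ_of_forall fun x => hPF x.2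
  rw [MeagerIn, hF]
  exact not_isMeagre_of_isOpen isOpen_univ univ_nonempty

lemma Perfect.exists_isCompact_not_countable_subset [PolishSpace Z] {C : Set Z}
    (hC : Perfect C) (hne : C.Nonempty) : ∃ K ⊆ C, IsCompact K ∧ ¬ K.Countable := by
  let := upgradeIsCompletelyMetrizable Z
  obtain ⟨f, hfC, hf, hfi⟩ := hC.exists_nat_bool_injection hne
  refine ⟨range f, hfC, isCompact_range hf, fun hcount => not_countable_nat_bool ?_⟩
  exact countable_univ_iff.1 (by simpa using hcount.preimage hfi)

lemma Perfect.exists_countable_compact_not_countable_base [PolishSpace Z] {P : Set Z}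
    (hP : Perfect P) : ∃ 𝒦 : Set (Set Z), 𝒦.Countable ∧ (∀ K ∈ 𝒦, IsCompact K ∧ ¬ K.Countable) ∧
      ∀ U, IsOpen U → (U ∩ P).Nonempty → ∃ K ∈ 𝒦, K ⊆ U ∩ P := by
  obtain ⟨b, hbc, -, hb⟩ := exists_countable_basis Z
  have hκ : ∀ V : Set Z, ∃ K, IsOpen V → (V ∩ P).Nonempty →
      K ⊆ closure (V ∩ P) ∧ IsCompact K ∧ ¬ K.Countable := by
    intro V
    by_cases hV : IsOpen V ∧ (V ∩ P).Nonempty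
    · obtain ⟨x, hxV, hxP⟩ := hV.2
      obtain ⟨hperf, hne⟩ := hP.closure_nhds_inter x hxP hxV hV.1
      obtain ⟨K, hK⟩ := hperf.exists_isCompact_not_countable_subset hne
      exact ⟨K, fun _ _ => hK⟩
    · exact ⟨∅, fun hVo hne => (hV ⟨hVo, hne⟩).elim⟩
  choose κ hκ using hκ
  refine ⟨κ '' {V ∈ b | (V ∩ P).Nonempty}, (hbc.mono (sep_subset _ _)).image κ, ?_, ?_⟩
  · rintro _ ⟨V, ⟨hVb, hVP⟩, rfl⟩
    exact (hκ V (hb.isOpen hVb) hVP).2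
  · rintro U hU ⟨x, hxU, hxP⟩
    obtain ⟨V, hVb, hxV, hVU⟩ := hb.exists_closure_subset (hU.mem_nhds hxU)
    refine ⟨κ V, mem_image_of_mem κ ⟨hVb, x, hxV, hxP⟩, ?_⟩
    calc κ V ⊆ closure (V ∩ P) := (hκ V (hb.isOpen hVb) ⟨x, hxV, hxP⟩).1
      _ ⊆ closure V ∩ closure P := closure_inter_subset_inter_closure V P
      _ ⊆ U ∩ P := inter_subset_inter hVU hP.closed.closure_subset

end

lemma CPM.exists_closed_cover {X : Type*} [TopologicalSpace X] [PolishSpace X] {A : Set X}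
    (hA : CPM A) {𝒮 : Set (Set X)} (h𝒮 : 𝒮.Countable) (hperf : ∀ P ∈ 𝒮, PerfectSet P) :
    ∃ E : ℕ → Set X, (∀ j, IsClosed (E j)) ∧ A ⊆ ⋃ j, E j ∧ ∀ P ∈ 𝒮, ∀ j, ¬ P ⊆ E j := by
  rcases 𝒮.eq_empty_or_nonempty with rfl | hne
  · exact ⟨fun _ => univ, fun _ => isClosed_univ, fun _ _ => mem_iUnion.2 ⟨0, trivial⟩, by simp⟩
  obtain ⟨f, rfl⟩ := h𝒮.exists_eq_range hne
  obtain ⟨_, ⟨E, hE, rfl⟩, hAE, hmeager⟩ := hA f fun n => hperf _ (mem_range_self n)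
  refine ⟨E, hE, hAE, ?_⟩
  rintro _ ⟨n, rfl⟩ j hj
  exact (hperf _ (mem_range_self n)).not_meagerIn_of_subset (hj.trans (subset_iUnion E j))
    (hmeager n)

section

variable {X Y : Type*} [TopologicalSpace X] [T2Space X] [SecondCountableTopology X]
  [TopologicalSpace Y] [T2Space Y] [SecondCountableTopology Y]

lemma IsCompact.exists_perfectSet_section_or_fst_image {K : Set (X × Y)} (hK : IsCompact K)
    (hunc : ¬ K.Countable) :
    (∃ x D, PerfectSet D ∧ {x} ×ˢ D ⊆ K) ∨ ∃ C, PerfectSet C ∧ C ⊆ Prod.fst '' K := by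
  by_cases hsec : ∃ x, ¬ (Prod.mk x ⁻¹' K).Countable
  · obtain ⟨x, hx⟩ := hsec
    obtain ⟨D, hD, hDne, hDK⟩ := exists_perfect_nonempty_of_isClosed_of_not_countable
      (hK.isClosed.preimage (Continuous.prodMk_right x)) hx
    refine .inl ⟨x, D, ⟨hD, hDne⟩, ?_⟩
    rintro ⟨_, y⟩ ⟨rfl, hy⟩
    exact hDK hy
  · push Not at hsec
    have hproj : ¬ (Prod.fst '' K).Countable := fun hcount => hunc <| by
      refine (hcount.biUnion fun x _ => (hsec x).image (Prod.mk x)).mono ?_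
      rintro ⟨a, b⟩ hab
      exact mem_biUnion (mem_image_of_mem _ hab) ⟨b, hab, rfl⟩
    obtain ⟨C, hC, hCne, hCK⟩ := exists_perfect_nonempty_of_isClosed_of_not_countable
      (hK.image continuous_fst).isClosed hproj
    exact .inr ⟨C, ⟨hC, hCne⟩, hCK⟩

lemma exists_countable_perfectSets_of_subset_prod {𝒦 : Set (Set (X × Y))} (h𝒦 : 𝒦.Countable)
    (hK : ∀ K ∈ 𝒦, IsCompact K ∧ ¬ K.Countable) :
    ∃ (𝒞 : Set (Set X)) (𝒟 : Set (Set Y)), 𝒞.Countable ∧ 𝒟.Countable ∧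
      (∀ C ∈ 𝒞, PerfectSet C) ∧ (∀ D ∈ 𝒟, PerfectSet D) ∧
      ∀ K ∈ 𝒦, ∀ E G, K ⊆ E ×ˢ G → (∃ C ∈ 𝒞, C ⊆ E) ∨ ∃ D ∈ 𝒟, D ⊆ G := by
  have hcd : ∀ K : Set (X × Y), ∃ (C : Set X) (D : Set Y), IsCompact K → ¬ K.Countable →
      (PerfectSet C ∧ C ⊆ Prod.fst '' K) ∨ (PerfectSet D ∧ ∃ x, {x} ×ˢ D ⊆ K) := by
    intro K
    by_cases h : IsCompact K ∧ ¬ K.Countable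
    · rcases h.1.exists_perfectSet_section_or_fst_image h.2 with ⟨x, D, hD, hxD⟩ | ⟨C, hC, hCK⟩
      exacts [⟨∅, D, fun _ _ => .inr ⟨hD, x, hxD⟩⟩, ⟨C, ∅, fun _ _ => .inl ⟨hC, hCK⟩⟩]
    · exact ⟨∅, ∅, fun h₁ h₂ => (h ⟨h₁, h₂⟩).elim⟩
  choose c d hcd using hcd
  refine ⟨c '' 𝒦 ∩ {C | PerfectSet C}, d '' 𝒦 ∩ {D | PerfectSet D},
    (h𝒦.image c).mono inter_subset_left, (h𝒦.image d).mono inter_subset_left,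
    fun _ h => h.2, fun _ h => h.2, fun K hK𝒦 E G hKEG => ?_⟩
  rcases hcd K (hK K hK𝒦).1 (hK K hK𝒦).2 with ⟨hC, hCK⟩ | ⟨hD, x, hxD⟩
  · refine .inl ⟨c K, ⟨mem_image_of_mem c hK𝒦, hC⟩, fun a ha => ?_⟩
    obtain ⟨p, hp, rfl⟩ := hCK ha
    exact (hKEG hp).1
  · refine .inr ⟨d K, ⟨mem_image_of_mem d hK𝒦, hD⟩, fun y hy => ?_⟩
    exact (hKEG (hxD (mk_mem_prod (mem_singleton x) hy))).2

end

theorem stmt16_general {X Y : Type*} [TopologicalSpace X] [PolishSpace X]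
    [TopologicalSpace Y] [PolishSpace Y]
    (A : Set X) (B : Set Y) (hA : CPM A) (hB : CPM B) :
    CPM (A ×ˢ B) := by
  intro P hP
  choose 𝒦 h𝒦 hK h𝒦P using fun n => (hP n).1.exists_countable_compact_not_countable_base
  obtain ⟨𝒞, 𝒟, h𝒞, h𝒟, hC, hD, hsplit⟩ :=
    exists_countable_perfectSets_of_subset_prod (countable_iUnion h𝒦)
      fun K hK𝒦 => (mem_iUnion.1 hK𝒦).elim fun n hn => hK n K hn
  obtain ⟨E, hE, hAE, hE𝒞⟩ := CPM.exists_closed_cover hA h𝒞 hC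
  obtain ⟨G, hG, hBG, hG𝒟⟩ := CPM.exists_closed_cover hB h𝒟 hD
  have hEG : ∀ i : ℕ × ℕ, IsClosed (E i.1 ×ˢ G i.2) := fun i => (hE _).prod (hG _)
  refine ⟨⋃ i : ℕ × ℕ, E i.1 ×ˢ G i.2, isFsigma_iUnion hEG, ?_, fun n => ?_⟩
  · rw [iUnion_prod]
    exact prod_mono hAE hBG
  refine meagerIn_iUnion fun i => meagerIn_of_isClosed_of_forall_not_subset (hEG i) (h𝒦P n)
    fun K hK𝒦 hKEG => ?_
  rcases hsplit K (mem_iUnion.2 ⟨n, hK𝒦⟩) _ _ hKEG with ⟨C, hC𝒞, hCE⟩ | ⟨D, hD𝒟, hDG⟩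
  exacts [hE𝒞 C hC𝒞 _ hCE, hG𝒟 D hD𝒟 _ hDG]

theorem stmt16 {X Y : Type*} [TopologicalSpace X] [PolishSpace X]
    [TopologicalSpace Y] [PolishSpace Y]
    (hX : Perfect (Set.univ : Set X)) (hY : Perfect (Set.univ : Set Y))
    (A : Set X) (B : Set Y) (hA : CPM A) (hB : CPM B) :
    CPM (A ×ˢ B) :=
  stmt16_general A B hA hB
end

section
/- Let ℱ be a countable family of perfect subsets of a perfect Polish space X such that every nonempty open set U ⊆ X contains a nowhere dense member of ℱ. Then the σ-ideal MGR*(ℱ), consisting of all sets A ⊆ X covered by some F_σ-set F with F ∩ P meager in P for every P ∈ ℱ, does not satisfy the countable chain condition (there is an uncountable family of pairwise disjoint Borel sets not in MGR*(ℱ)). -/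
/-!
Using the hypothesis over and over, build a tree of nowhere dense members of `𝓕` indexed by
finite sequences of natural numbers: the children of a node have pairwise disjoint closed
neighbourhoods avoiding the member at the node, accumulate only at that member, and come
arbitrarily close to each of its points with either parity of their index. For `x : ℕ → Bool`
let `K x` be the closure of the members at the nodes whose parities follow `x`, and
`B x = K x \ ⋃ members`. In `K x` every member is nowhere dense while every nonempty open set
contains a whole member, so by the Baire category theorem in `K x` no `Fσ` set that is meagre in
every member covers `B x`. A point of `B x` determines, level by level, the node of the tree below
which it lies, hence determines `x`, so the sets `B x` are pairwise disjoint.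
-/

open Set

open Function Metric Filter Topology

theorem closure_union_iUnion_subset_of_subset_cthickening {X : Type*} [PseudoMetricSpace X]
    {G : Set X} (hG : IsClosed G) {S : ℕ → Set X} {ε : ℕ → ℝ} (hε : Tendsto ε atTop (𝓝 0))
    (hS : ∀ j, S j ⊆ cthickening (ε j) G) :
    closure (G ∪ ⋃ j, S j) ⊆ G ∪ ⋃ j, closure (S j) := by
  intro p hp
  by_contra hpG
  rw [mem_union, not_or, mem_iUnion, not_exists] at hpG
  obtain ⟨hpG, hpS⟩ := hpG
  obtain ⟨δ, hδ, hpδ⟩ : ∃ δ > 0, p ∉ cthickening δ G := by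
    rw [← hG.closure_eq, closure_eq_iInter_cthickening] at hpG
    simpa using hpG
  obtain ⟨J, hJ⟩ := eventually_atTop.1 (hε.eventually (ge_mem_nhds hδ))
  have hsub : G ∪ ⋃ j, S j ⊆ cthickening δ G ∪ ⋃ j ∈ Iio J, S j := by
    refine union_subset ((self_subset_cthickening G).trans subset_union_left)
      (iUnion_subset fun j => ?_)
    rcases lt_or_ge j J with hj | hj
    · exact subset_union_of_subset_right (subset_biUnion_of_mem (u := S) (mem_Iio.2 hj)) _
    · exact (hS j).trans ((cthickening_mono (hJ j hj) G).trans subset_union_left)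
  have hp' := closure_mono hsub hp
  rw [closure_union, isClosed_cthickening.closure_eq, (finite_Iio J).closure_biUnion] at hp'
  rcases hp' with hp' | hp'
  · exact hpδ hp'
  · obtain ⟨j, -, hj⟩ := mem_iUnion₂.1 hp'
    exact hpS j hj

theorem exists_seq_pairwise_disjoint {X α : Type*} [TopologicalSpace X] {F : Set X}
    {g : α → Set X} {p : ℕ → α → Prop}
    (h : ∀ j A, IsClosed A → Disjoint A F → ∃ a, p j a ∧ IsClosed (g a) ∧ Disjoint (g a) (A ∪ F)) :
    ∃ a : ℕ → α, (∀ j, p j (a j)) ∧ (∀ j, Disjoint (g (a j)) F) ∧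
      Pairwise (Disjoint on (fun j => g (a j))) := by
  choose next hnext using h
  let acc : ℕ → {A : Set X // IsClosed A ∧ Disjoint A F} := fun j =>
    Nat.rec ⟨∅, isClosed_empty, empty_disjoint F⟩
      (fun j A => ⟨A.1 ∪ g (next j A.1 A.2.1 A.2.2), A.2.1.union (hnext _ _ _ _).2.1,
        disjoint_union_left.2 ⟨A.2.2, (hnext _ _ _ _).2.2.mono_right subset_union_right⟩⟩) j
  let a : ℕ → α := fun j => next j (acc j).1 (acc j).2.1 (acc j).2.2
  have hacc : ∀ {k j}, k < j → g (a k) ⊆ (acc j).1 := by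
    intro k j hkj
    induction hkj with
    | refl => exact subset_union_right
    | step _ ih => exact ih.trans subset_union_left
  refine ⟨a, fun j => (hnext _ _ _ _).1,
    fun j => (hnext _ _ _ _).2.2.mono_right subset_union_right,
    (pairwise_disjoint_on _).2 fun k j hkj => ?_⟩
  exact ((hnext _ _ _ _).2.2.mono_right subset_union_left).symm.mono_left (hacc hkj)

theorem exists_subset_of_diff_iUnion_subset {X ι : Type*} [TopologicalSpace X] [Countable ι]
    {K : Set X} [BaireSpace K] (hK : K.Nonempty) {G : ι → Set X} (hGc : ∀ i, IsClosed (G i))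
    (hGne : ∀ i, (G i).Nonempty) (hGd : Pairwise (Disjoint on G))
    (hdense : ∀ p ∈ K, ∀ U ∈ 𝓝 p, ∃ i j, i ≠ j ∧ G i ⊆ K ∩ U ∧ G j ⊆ K ∩ U)
    {s : ℕ → Set X} (hs : ∀ k, IsClosed (s k)) (hcov : K \ ⋃ i, G i ⊆ ⋃ k, s k) :
    ∃ k i, G i ⊆ s k := by
  have := hK.to_subtype
  have hint : ∀ {A : Set X} {y : K}, y ∈ interior ((↑) ⁻¹' A : Set K) →
      ∃ i j, i ≠ j ∧ G i ⊆ A ∧ G j ⊆ A := by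
    intro A y hy
    obtain ⟨U, hU, hUA⟩ := (mem_nhds_subtype K y _).1 (mem_interior_iff_mem_nhds.1 hy)
    obtain ⟨i, j, hij, hi, hj⟩ := hdense y y.2 U hU
    have hKU : K ∩ U ⊆ A := fun x hx => hUA (show (⟨x, hx.1⟩ : K) ∈ (↑) ⁻¹' U from hx.2)
    exact ⟨i, j, hij, hi.trans hKU, hj.trans hKU⟩
  let f : ι ⊕ ℕ → Set K := Sum.elim (fun i => (↑) ⁻¹' G i) fun k => (↑) ⁻¹' s k
  have hf : ⋃ l, f l = univ := by
    refine eq_univ_of_forall fun y => ?_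
    by_cases hy : (y : X) ∈ ⋃ i, G i
    · obtain ⟨i, hi⟩ := mem_iUnion.1 hy
      exact mem_iUnion.2 ⟨Sum.inl i, hi⟩
    · obtain ⟨k, hk⟩ := mem_iUnion.1 (hcov ⟨y.2, hy⟩)
      exact mem_iUnion.2 ⟨Sum.inr k, hk⟩
  obtain ⟨l, y, hy⟩ := nonempty_interior_of_iUnion_of_closed
    (Sum.forall.2 ⟨fun i => (hGc i).preimage continuous_subtype_val,
      fun k => (hs k).preimage continuous_subtype_val⟩) hf
  rcases l with i₀ | k
  · obtain ⟨i, j, hij, hi, hj⟩ := hint hy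
    obtain ⟨i', hi'₀, hi'⟩ : ∃ i', i' ≠ i₀ ∧ G i' ⊆ G i₀ := by
      by_cases h : i = i₀
      · exact ⟨j, h ▸ hij.symm, hj⟩
      · exact ⟨i, h, hi⟩
    exact absurd ((hGd hi'₀).eq_bot_of_le hi') (hGne i').ne_empty
  · obtain ⟨i, -, -, hi, -⟩ := hint hy
    exact ⟨k, i, hi⟩

theorem not_countable_range_of_injective {α : Type*} {f : (ℕ → Bool) → α}
    (hf : Injective f) : ¬ (range f).Countable := by
  intro h
  have : Countable (ℕ → Bool) :=
    countable_univ_iff.1 (MapsTo.countable_of_injOn (fun x _ => mem_range_self x) hf.injOn h)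
  rw [← Cardinal.mk_le_aleph0_iff] at this
  exact this.not_gt (by simpa using Cardinal.cantor Cardinal.aleph0)

/-- A node of the construction: the member `𝓕 idx` together with a closed neighbourhood `guard`
of it, which will contain everything built below the node. -/
structure Cell (X : Type*) where
  idx : ℕ
  guard : Set X

structure Cell.IsGood {X : Type*} [TopologicalSpace X] (𝓕 : ℕ → Set X) (c : Cell X) : Prop where
  isClosed_guard : IsClosed c.guard
  subset_interior_guard : 𝓕 c.idx ⊆ interior c.guard
  isNowhereDense : IsNowhereDense (𝓕 c.idx)

theorem exists_isGood_guard_subset {X : Type*} [TopologicalSpace X] [RegularSpace X]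
    {𝓕 : ℕ → Set X}
    (hdense : ∀ U : Set X, IsOpen U → U.Nonempty → ∃ n, 𝓕 n ⊆ U ∧ IsNowhereDense (𝓕 n))
    {U : Set X} (hU : IsOpen U) (hne : U.Nonempty) : ∃ c : Cell X, c.IsGood 𝓕 ∧ c.guard ⊆ U := by
  obtain ⟨p, hp⟩ := hne
  obtain ⟨V, hV, hVc, hVU⟩ := exists_mem_nhds_isClosed_subset (hU.mem_nhds hp)
  obtain ⟨n, hn, hnd⟩ := hdense (interior V) isOpen_interior ⟨p, mem_interior_iff_mem_nhds.2 hV⟩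
  exact ⟨⟨n, V⟩, ⟨hVc, hn, hnd⟩, hVU⟩

section Construction

variable {X : Type*} [MetricSpace X] (𝓕 : ℕ → Set X)

structure IsChildFamily (P : Cell X) (d : ℕ → Cell X) : Prop where
  isGood : ∀ j, (d j).IsGood 𝓕
  guard_subset : ∀ j, (d j).guard ⊆ P.guard
  disjoint_member : ∀ j, Disjoint (d j).guard (𝓕 P.idx)
  pairwise_disjoint : Pairwise (Disjoint on fun j => (d j).guard)
  guard_subset_cthickening : ∀ j, (d j).guard ⊆ cthickening ((2 : ℝ)⁻¹ ^ j) (𝓕 P.idx)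
  frequently_guard_subset_ball :
    ∀ z ∈ 𝓕 P.idx, ∀ ε > 0, ∀ b, ∃ᶠ j in atTop, j.bodd = b ∧ (d j).guard ⊆ ball z ε

/-- The node `j :: u` is the `j`-th child of `u`, so the ancestors of a node are its suffixes. -/
structure IsScheme (cell : List ℕ → Cell X) : Prop where
  isGood_nil : (cell []).IsGood 𝓕
  isChildFamily : ∀ u, IsChildFamily 𝓕 (cell u) fun j => cell (j :: u)

variable {𝓕}

theorem Cell.IsGood.exists_child
    (hdense : ∀ U : Set X, IsOpen U → U.Nonempty → ∃ n, 𝓕 n ⊆ U ∧ IsNowhereDense (𝓕 n))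
    {P : Cell X} (hP : P.IsGood 𝓕) {A : Set X} (hA : IsClosed A) (hAP : Disjoint A (𝓕 P.idx))
    {z : X} (hz : z ∈ 𝓕 P.idx) {r : ℝ} (hr : 0 < r) :
    ∃ c : Cell X, c.IsGood 𝓕 ∧ c.guard ⊆ P.guard ∩ ball z r ∧ Disjoint c.guard (A ∪ 𝓕 P.idx) := by
  set V := (interior P.guard ∩ ball z r) \ A
  have hV : IsOpen V := (isOpen_interior.inter isOpen_ball).sdiff hA
  have hzV : z ∈ V := ⟨⟨hP.subset_interior_guard hz, mem_ball_self hr⟩, disjoint_right.1 hAP hz⟩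
  have hne : (V \ closure (𝓕 P.idx)).Nonempty := by
    rw [nonempty_iff_ne_empty, Ne, sdiff_eq_empty]
    intro hVF
    have : V ⊆ ∅ := hP.isNowhereDense ▸ interior_maximal hVF hV
    exact this hzV
  obtain ⟨c, hc, hcV⟩ := exists_isGood_guard_subset hdense (hV.sdiff isClosed_closure) hne
  refine ⟨c, hc, fun y hy => ⟨interior_subset (hcV hy).1.1.1, (hcV hy).1.1.2⟩, ?_⟩
  exact disjoint_union_right.2 ⟨disjoint_left.2 fun y hy => (hcV hy).1.2,
    disjoint_left.2 fun y hy hyF => (hcV hy).2 (subset_closure hyF)⟩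

theorem Cell.IsGood.exists_isChildFamily [SecondCountableTopology X]
    (hdense : ∀ U : Set X, IsOpen U → U.Nonempty → ∃ n, 𝓕 n ⊆ U ∧ IsNowhereDense (𝓕 n))
    {P : Cell X} (hP : P.IsGood 𝓕) (hne : (𝓕 P.idx).Nonempty) : ∃ d, IsChildFamily 𝓕 P d := by
  have := hne.to_subtype
  obtain ⟨q, hq⟩ := TopologicalSpace.exists_dense_seq (𝓕 P.idx)
  -- child `j = bit b (pair i m)` lies within `2⁻¹ ^ j` of the `i`-th point of a dense sequence
  let target : ℕ → 𝓕 P.idx := fun j => q j.div2.unpair.1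
  obtain ⟨d, hd, hdF, hdd⟩ := exists_seq_pairwise_disjoint (F := 𝓕 P.idx) (g := Cell.guard)
    (p := fun j c => c.IsGood 𝓕 ∧ c.guard ⊆ P.guard ∩ ball (target j : X) ((2 : ℝ)⁻¹ ^ j))
    fun j A hA hAF => by
      obtain ⟨c, hc, hcsub, hcdisj⟩ := hP.exists_child hdense hA hAF (target j).2
        (r := (2 : ℝ)⁻¹ ^ j) (by positivity)
      exact ⟨c, ⟨hc, hcsub⟩, hc.isClosed_guard, hcdisj⟩
  have hball : ∀ j, (d j).guard ⊆ ball (target j : X) ((2 : ℝ)⁻¹ ^ j) :=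
    fun j => (hd j).2.trans inter_subset_right
  refine ⟨d, fun j => (hd j).1, fun j => (hd j).2.trans inter_subset_left, hdF, hdd,
    fun j => (hball j).trans (ball_subset_closedBall.trans
      (closedBall_subset_cthickening (target j).2 _)), ?_⟩
  intro z hz ε hε b
  obtain ⟨i, hi⟩ := hq.exists_dist_lt ⟨z, hz⟩ (half_pos hε)
  obtain ⟨M, hM⟩ := exists_pow_lt_of_lt_one (half_pos hε) (by norm_num : (2 : ℝ)⁻¹ < 1)
  refine frequently_atTop.2 fun N => ?_
  set j := Nat.bit b (Nat.pair i (max N M))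
  have hj : max N M ≤ j := by
    have := Nat.right_le_pair i (max N M)
    simp only [j, Nat.bit_val]
    omega
  have htarget : target j = q i := by simp [target, j, Nat.div2_bit, Nat.unpair_pair]
  refine ⟨j, le_of_max_le_left hj, Nat.bodd_bit _ _, (hball j).trans (ball_subset_ball' ?_)⟩
  have hpow : (2 : ℝ)⁻¹ ^ j ≤ (2 : ℝ)⁻¹ ^ M :=
    pow_le_pow_of_le_one (by norm_num) (by norm_num) (le_of_max_le_right hj)
  have hi' : dist (q i : X) z < ε / 2 := by rw [dist_comm]; exact hi
  rw [htarget]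
  linarith

theorem exists_isScheme [SecondCountableTopology X] (hne : ∀ n, (𝓕 n).Nonempty)
    (hdense : ∀ U : Set X, IsOpen U → U.Nonempty → ∃ n, 𝓕 n ⊆ U ∧ IsNowhereDense (𝓕 n)) :
    ∃ cell, IsScheme 𝓕 cell := by
  obtain ⟨root, hroot, -⟩ :=
    exists_isGood_guard_subset hdense isOpen_univ ((hne 0).mono (subset_univ _))
  choose! family hfamily using
    fun (P : Cell X) (hP : P.IsGood 𝓕) => hP.exists_isChildFamily hdense (hne P.idx)
  let cell : List ℕ → Cell X := fun u => u.foldr (fun j P => family P j) root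
  have hgood : ∀ u, (cell u).IsGood 𝓕 := by
    intro u
    induction u with
    | nil => exact hroot
    | cons j u ih => exact (hfamily _ ih).isGood j
  exact ⟨cell, hroot, fun u => hfamily _ (hgood u)⟩

theorem IsScheme.isGood {cell : List ℕ → Cell X} (hS : IsScheme 𝓕 cell) :
    ∀ u, (cell u).IsGood 𝓕
  | [] => hS.isGood_nil
  | j :: u => (hS.isChildFamily u).isGood j

end Construction

theorem List.IsSuffix.eq_or_cons_suffix {α : Type*} {u : List α} :
    ∀ {v : List α}, u <:+ v → u = v ∨ ∃ j, j :: u <:+ v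
  | [], h => .inl (List.suffix_nil.1 h)
  | j :: v, h => by
    rcases List.suffix_cons_iff.1 h with h | h
    · exact .inl h
    · rcases h.eq_or_cons_suffix with rfl | ⟨k, hk⟩
      · exact .inr ⟨j, List.suffix_refl _⟩
      · exact .inr ⟨k, hk.trans (List.suffix_cons j v)⟩

def InBranch (x : ℕ → Bool) : List ℕ → Prop
  | [] => True
  | j :: u => j.bodd = x u.length ∧ InBranch x u

theorem InBranch.of_suffix {x : ℕ → Bool} {u : List ℕ} :
    ∀ {v : List ℕ}, InBranch x v → u <:+ v → InBranch x u
  | [], _, h => List.suffix_nil.1 h ▸ trivial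
  | j :: v, hv, h => by
    rcases List.suffix_cons_iff.1 h with rfl | h
    · exact hv
    · exact hv.2.of_suffix h

theorem InBranch.eq_of_lt_length {x y : ℕ → Bool} {l : ℕ} :
    ∀ {u : List ℕ}, InBranch x u → InBranch y u → l < u.length → x l = y l
  | j :: u, hx, hy, hl => by
    rcases (Nat.lt_succ_iff.1 hl).lt_or_eq with hl | rfl
    · exact hx.2.eq_of_lt_length hy.2 hl
    · exact hx.1.symm.trans hy.1

section Branch

variable {X : Type*} [MetricSpace X] {𝓕 : ℕ → Set X} {cell : List ℕ → Cell X}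

variable (𝓕 cell) in
def branchClosure (x : ℕ → Bool) (u : List ℕ) : Set X :=
  closure (⋃ (v) (_ : InBranch x v ∧ u <:+ v), 𝓕 (cell v).idx)

variable (𝓕 cell) in
def branchSet (x : ℕ → Bool) : Set X :=
  branchClosure 𝓕 cell x [] \ ⋃ u, 𝓕 (cell u).idx

theorem IsScheme.member_subset_guard (hS : IsScheme 𝓕 cell) (u : List ℕ) :
    𝓕 (cell u).idx ⊆ (cell u).guard :=
  (hS.isGood u).subset_interior_guard.trans interior_subset

theorem IsScheme.guard_subset_of_suffix (hS : IsScheme 𝓕 cell) {u v : List ℕ} (h : u <:+ v) :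
    (cell v).guard ⊆ (cell u).guard := by
  obtain ⟨t, rfl⟩ := h
  induction t with
  | nil => exact subset_rfl
  | cons j t ih => exact ((hS.isChildFamily (t ++ u)).guard_subset j).trans ih

theorem IsScheme.disjoint_guard_of_length_eq (hS : IsScheme 𝓕 cell) :
    ∀ {u v : List ℕ}, u ≠ v → u.length = v.length → Disjoint (cell u).guard (cell v).guard
  | [], [], h, _ => absurd rfl h
  | j :: u, k :: v, h, hl => by
    by_cases huv : u = v
    · subst huv
      exact (hS.isChildFamily u).pairwise_disjoint fun hjk => h (hjk ▸ rfl)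
    · exact (hS.disjoint_guard_of_length_eq huv (Nat.succ_injective hl)).mono
        ((hS.isChildFamily u).guard_subset j) ((hS.isChildFamily v).guard_subset k)

theorem IsScheme.disjoint_guard_member_of_suffix (hS : IsScheme 𝓕 cell) {u v : List ℕ}
    (h : u <:+ v) (hne : u ≠ v) : Disjoint (cell v).guard (𝓕 (cell u).idx) := by
  obtain ⟨j, hj⟩ := h.eq_or_cons_suffix.resolve_left hne
  exact ((hS.isChildFamily u).disjoint_member j).mono_left (hS.guard_subset_of_suffix hj)

theorem IsScheme.pairwise_disjoint_member (hS : IsScheme 𝓕 cell) :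
    Pairwise (Disjoint on fun u => 𝓕 (cell u).idx) := by
  suffices key : ∀ u v, u ≠ v → u.length ≤ v.length →
      Disjoint (𝓕 (cell u).idx) (𝓕 (cell v).idx) by
    intro u v huv
    rcases le_total u.length v.length with h | h
    · exact key u v huv h
    · exact (key v u huv.symm h).symm
  intro u v huv hl
  obtain ⟨w, hwv, hw⟩ : ∃ w, w <:+ v ∧ w.length = u.length :=
    ⟨v.drop (v.length - u.length), List.drop_suffix _ _, by simp only [List.length_drop]; omega⟩
  rcases eq_or_ne w u with rfl | hwu
  · exact ((hS.disjoint_guard_member_of_suffix hwv huv).mono_left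
      (hS.member_subset_guard v)).symm
  · exact (hS.disjoint_guard_of_length_eq hwu hw).symm.mono (hS.member_subset_guard u)
      ((hS.member_subset_guard v).trans (hS.guard_subset_of_suffix hwv))

theorem member_subset_branchClosure {x : ℕ → Bool} {u v : List ℕ} (hv : InBranch x v)
    (h : u <:+ v) : 𝓕 (cell v).idx ⊆ branchClosure 𝓕 cell x u :=
  (subset_iUnion₂ (s := fun v (_ : InBranch x v ∧ u <:+ v) => 𝓕 (cell v).idx) v ⟨hv, h⟩).trans
    subset_closure

theorem inBranch_of_mem_branchClosure {x : ℕ → Bool} {u : List ℕ} {p : X}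
    (hp : p ∈ branchClosure 𝓕 cell x u) : InBranch x u := by
  by_contra hu
  have : (⋃ (v) (_ : InBranch x v ∧ u <:+ v), 𝓕 (cell v).idx) = ∅ :=
    iUnion_eq_empty.2 fun v => iUnion_eq_empty.2 fun hv => absurd (hv.1.of_suffix hv.2) hu
  rw [branchClosure, this, closure_empty] at hp
  exact hp

theorem IsScheme.branchClosure_subset_guard (hS : IsScheme 𝓕 cell) (x : ℕ → Bool) (u : List ℕ) :
    branchClosure 𝓕 cell x u ⊆ (cell u).guard :=
  closure_minimal (iUnion₂_subset fun v hv =>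
    (hS.member_subset_guard v).trans (hS.guard_subset_of_suffix hv.2))
    (hS.isGood u).isClosed_guard

theorem IsScheme.branchClosure_subset (hS : IsScheme 𝓕 cell) (h𝓕c : ∀ n, IsClosed (𝓕 n))
    (x : ℕ → Bool) (u : List ℕ) :
    branchClosure 𝓕 cell x u ⊆ 𝓕 (cell u).idx ∪ ⋃ j, branchClosure 𝓕 cell x (j :: u) := by
  let S j := ⋃ (v) (_ : InBranch x v ∧ j :: u <:+ v), 𝓕 (cell v).idx
  have hsplit : ⋃ (v) (_ : InBranch x v ∧ u <:+ v), 𝓕 (cell v).idx ⊆ 𝓕 (cell u).idx ∪ ⋃ j, S j := by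
    refine iUnion₂_subset fun v ⟨hv, huv⟩ => ?_
    rcases huv.eq_or_cons_suffix with rfl | ⟨j, hj⟩
    · exact subset_union_left
    · exact (subset_iUnion₂ (s := fun v (_ : InBranch x v ∧ j :: u <:+ v) => 𝓕 (cell v).idx)
        v ⟨hv, hj⟩).trans ((subset_iUnion S j).trans subset_union_right)
  have hS' : ∀ j, S j ⊆ cthickening ((2 : ℝ)⁻¹ ^ j) (𝓕 (cell u).idx) := fun j =>
    subset_closure.trans ((hS.branchClosure_subset_guard x (j :: u)).trans
      ((hS.isChildFamily u).guard_subset_cthickening j))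
  exact (closure_mono hsplit).trans (closure_union_iUnion_subset_of_subset_cthickening (h𝓕c _)
    (tendsto_pow_atTop_nhds_zero_of_lt_one (by norm_num) (by norm_num)) hS')

theorem IsScheme.exists_length_eq_mem_branchClosure (hS : IsScheme 𝓕 cell)
    (h𝓕c : ∀ n, IsClosed (𝓕 n)) {x : ℕ → Bool} {p : X} (hp : p ∈ branchSet 𝓕 cell x) :
    ∀ L, ∃ u : List ℕ, u.length = L ∧ p ∈ branchClosure 𝓕 cell x u
  | 0 => ⟨[], rfl, hp.1⟩
  | L + 1 => by
    obtain ⟨u, rfl, hu⟩ := hS.exists_length_eq_mem_branchClosure h𝓕c hp L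
    rcases hS.branchClosure_subset h𝓕c x u hu with hpu | hpu
    · exact absurd (mem_iUnion.2 ⟨u, hpu⟩) hp.2
    · obtain ⟨j, hj⟩ := mem_iUnion.1 hpu
      exact ⟨j :: u, rfl, hj⟩

theorem IsScheme.disjoint_branchSet (hS : IsScheme 𝓕 cell) (h𝓕c : ∀ n, IsClosed (𝓕 n))
    {x y : ℕ → Bool} (hxy : x ≠ y) : Disjoint (branchSet 𝓕 cell x) (branchSet 𝓕 cell y) := by
  obtain ⟨l, hl⟩ := Function.ne_iff.1 hxy
  refine disjoint_left.2 fun p hpx hpy => hl ?_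
  obtain ⟨u, hu, hpu⟩ := hS.exists_length_eq_mem_branchClosure h𝓕c hpx (l + 1)
  obtain ⟨v, hv, hpv⟩ := hS.exists_length_eq_mem_branchClosure h𝓕c hpy (l + 1)
  obtain rfl : u = v := by
    by_contra huv
    exact disjoint_left.1 (hS.disjoint_guard_of_length_eq huv (hu.trans hv.symm))
      (hS.branchClosure_subset_guard x u hpu) (hS.branchClosure_subset_guard y v hpv)
  exact (inBranch_of_mem_branchClosure hpu).eq_of_lt_length
    (inBranch_of_mem_branchClosure hpv) (by omega)

theorem IsScheme.frequently_inBranch_member_subset_ball (hS : IsScheme 𝓕 cell) {x : ℕ → Bool}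
    {v : List ℕ} (hv : InBranch x v) {y : X} (hy : y ∈ 𝓕 (cell v).idx) {ε : ℝ} (hε : 0 < ε) :
    ∃ᶠ j in atTop, InBranch x (j :: v) ∧ 𝓕 (cell (j :: v)).idx ⊆ ball y ε :=
  ((hS.isChildFamily v).frequently_guard_subset_ball y hy ε hε (x v.length)).mono
    fun _ hj => ⟨⟨hj.1, hv⟩, (hS.member_subset_guard _).trans hj.2⟩

theorem IsScheme.exists_ne_member_subset (hS : IsScheme 𝓕 cell) {x : ℕ → Bool} {p : X}
    (hp : p ∈ branchClosure 𝓕 cell x []) {U : Set X} (hU : U ∈ 𝓝 p) :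
    ∃ v w, v ≠ w ∧ 𝓕 (cell v).idx ⊆ branchClosure 𝓕 cell x [] ∩ U ∧
      𝓕 (cell w).idx ⊆ branchClosure 𝓕 cell x [] ∩ U := by
  obtain ⟨ε, hε, hεU⟩ := Metric.mem_nhds_iff.1 hU
  obtain ⟨y, hy, hpy⟩ := Metric.mem_closure_iff.1 hp (ε / 2) (half_pos hε)
  obtain ⟨v, ⟨hv, -⟩, hyv⟩ := mem_iUnion₂.1 hy
  have hfreq := hS.frequently_inBranch_member_subset_ball hv hyv (half_pos hε)
  have hball : ball y (ε / 2) ⊆ U :=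
    (ball_subset_ball' (by linarith [dist_comm p y])).trans hεU
  have hsub : ∀ {i}, InBranch x (i :: v) ∧ 𝓕 (cell (i :: v)).idx ⊆ ball y (ε / 2) →
      𝓕 (cell (i :: v)).idx ⊆ branchClosure 𝓕 cell x [] ∩ U := fun hi =>
    subset_inter (member_subset_branchClosure hi.1 List.nil_suffix) (hi.2.trans hball)
  obtain ⟨j, hj⟩ := hfreq.exists
  obtain ⟨k, hk, hjk⟩ := (hfreq.and_eventually (eventually_gt_atTop j)).exists
  exact ⟨j :: v, k :: v, fun h => hjk.ne (List.cons_eq_cons.1 h).1, hsub hj, hsub hk⟩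

theorem IsScheme.not_exists_isFsigma_cover [CompleteSpace X] (hS : IsScheme 𝓕 cell)
    (h𝓕c : ∀ n, IsClosed (𝓕 n)) (h𝓕ne : ∀ n, (𝓕 n).Nonempty) (x : ℕ → Bool) :
    ¬ ∃ F, IsFsigma F ∧ branchSet 𝓕 cell x ⊆ F ∧ ∀ n, MeagerIn F (𝓕 n) := by
  rintro ⟨_, ⟨s, hs, rfl⟩, hcov, hmeagre⟩
  have : CompleteSpace (branchClosure 𝓕 cell x []) :=
    IsClosed.completeSpace_coe (hs := isClosed_closure)
  obtain ⟨k, u, hu⟩ := exists_subset_of_diff_iUnion_subset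
    ((h𝓕ne _).mono (member_subset_branchClosure (v := []) trivial List.nil_suffix))
    (fun u => h𝓕c (cell u).idx) (fun u => h𝓕ne _) hS.pairwise_disjoint_member
    (fun p hp U hU => hS.exists_ne_member_subset hp hU) hs hcov
  have : CompleteSpace (𝓕 (cell u).idx) := IsClosed.completeSpace_coe (hs := h𝓕c _)
  have := (h𝓕ne (cell u).idx).to_subtype
  refine not_isMeagre_of_isOpen isOpen_univ univ_nonempty ((hmeagre (cell u).idx).mono ?_)
  exact fun y _ => mem_iUnion.2 ⟨k, hu y.2⟩

theorem IsScheme.branchSet_nonempty [CompleteSpace X] (hS : IsScheme 𝓕 cell)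
    (h𝓕c : ∀ n, IsClosed (𝓕 n)) (h𝓕ne : ∀ n, (𝓕 n).Nonempty) (x : ℕ → Bool) :
    (branchSet 𝓕 cell x).Nonempty := by
  refine nonempty_iff_ne_empty.2 fun h => hS.not_exists_isFsigma_cover h𝓕c h𝓕ne x
    ⟨∅, ⟨fun _ => ∅, fun _ => isClosed_empty, iUnion_empty.symm⟩, h.subset, fun n => ?_⟩
  simpa [MeagerIn] using IsMeagre.empty

theorem measurableSet_branchSet [MeasurableSpace X] [BorelSpace X] (h𝓕c : ∀ n, IsClosed (𝓕 n))
    (x : ℕ → Bool) : MeasurableSet (branchSet 𝓕 cell x) :=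
  isClosed_closure.measurableSet.diff (.iUnion fun _ => (h𝓕c _).measurableSet)

end Branch

theorem stmt18_general {X : Type*} [TopologicalSpace X] [PolishSpace X]
    [MeasurableSpace X] [BorelSpace X]
    (𝓕 : ℕ → Set X)
    (h𝓕 : ∀ n, PerfectSet (𝓕 n))
    (hdense : ∀ U : Set X, IsOpen U → U.Nonempty →
      ∃ n, 𝓕 n ⊆ U ∧ IsNowhereDense (𝓕 n)) :
    ∃ 𝓐 : Set (Set X), ¬ 𝓐.Countable ∧ (∀ s ∈ 𝓐, MeasurableSet s) ∧
      𝓐.PairwiseDisjoint id ∧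
      ∀ s ∈ 𝓐, ¬ ∃ F : Set X, IsFsigma F ∧ s ⊆ F ∧ ∀ n, MeagerIn F (𝓕 n) := by
  let := TopologicalSpace.upgradeIsCompletelyMetrizable X
  have h𝓕c : ∀ n, IsClosed (𝓕 n) := fun n => (h𝓕 n).1.closed
  have h𝓕ne : ∀ n, (𝓕 n).Nonempty := fun n => (h𝓕 n).2
  obtain ⟨cell, hS⟩ := exists_isScheme h𝓕ne hdense
  have hinj : Injective (branchSet 𝓕 cell) := fun x y hxy => by
    by_contra hne
    obtain ⟨p, hp⟩ := hS.branchSet_nonempty h𝓕c h𝓕ne x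
    exact disjoint_left.1 (hS.disjoint_branchSet h𝓕c hne) hp (hxy ▸ hp)
  refine ⟨range (branchSet 𝓕 cell), not_countable_range_of_injective hinj, ?_, ?_, ?_⟩
  · rintro _ ⟨x, rfl⟩
    exact measurableSet_branchSet h𝓕c x
  · rintro _ ⟨x, rfl⟩ _ ⟨y, rfl⟩ hne
    exact hS.disjoint_branchSet h𝓕c fun h => hne (h ▸ rfl)
  · rintro _ ⟨x, rfl⟩
    exact hS.not_exists_isFsigma_cover h𝓕c h𝓕ne x

theorem stmt18 {X : Type*} [TopologicalSpace X] [PolishSpace X]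
    [MeasurableSpace X] [BorelSpace X]
    (hX : Perfect (Set.univ : Set X)) (𝓕 : ℕ → Set X)
    (h𝓕 : ∀ n, PerfectSet (𝓕 n))
    (hdense : ∀ U : Set X, IsOpen U → U.Nonempty →
      ∃ n, 𝓕 n ⊆ U ∧ IsNowhereDense (𝓕 n)) :
    ∃ 𝓐 : Set (Set X), ¬ 𝓐.Countable ∧ (∀ s ∈ 𝓐, MeasurableSet s) ∧
      𝓐.PairwiseDisjoint id ∧
      ∀ s ∈ 𝓐, ¬ ∃ F : Set X, IsFsigma F ∧ s ⊆ F ∧ ∀ n, MeagerIn F (𝓕 n) :=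
  stmt18_general 𝓕 h𝓕 hdense
end

section
/- Let {f_α : α < 𝔟} ⊆ ℕ^ℕ be ≤*-increasing and unbounded, let h : ℕ^ℕ → P be a homeomorphism onto the irrationals P of I = [0,1], let ℚ = I \ P, A = {h(f_α) : α < 𝔟} and B = A ∪ ℚ. If F is any F_σ-set in I with A ⊆ F, then F ∩ ℚ ≠ ∅. -/
/-!
Suppose `F ⊆ [0,1]` is `Fσ` and misses `ℚ`. Being a countable union of closed subsets of the compact
interval, `F` is σ-compact, and it lies inside the irrationals, so its pullback along `h` is a
σ-compact subset of `ℕ^ℕ`. Compact subsets of `ℕ^ℕ` are pointwise bounded, and diagonalising the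
countably many bounds gives a single `g` dominating the whole pullback eventually. Since the pullback
contains every `f α`, this contradicts the unboundedness of the family.
-/

open Set

open Filter

theorem IsFsigma.isSigmaCompact {X : Type*} [TopologicalSpace X] [CompactSpace X] {F : Set X}
    (hF : IsFsigma F) : IsSigmaCompact F := by
  obtain ⟨s, hs, rfl⟩ := hF
  exact ⟨s, fun n ↦ (hs n).isCompact, rfl⟩

theorem IsSigmaCompact.preimage_of_subset_range {X Y : Type*} [TopologicalSpace X]
    [TopologicalSpace Y] {e : X → Y} (he : Topology.IsEmbedding e) {S : Set Y}
    (hS : IsSigmaCompact S) (hSe : S ⊆ range e) : IsSigmaCompact (e ⁻¹' S) := by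
  rwa [he.isSigmaCompact_iff, image_preimage_eq_of_subset hSe]

theorem IsCompact.bddAbove_pi {ι α : Type*} [LinearOrder α] [TopologicalSpace α]
    [ClosedIciTopology α] [Nonempty α] {K : Set (ι → α)} (hK : IsCompact K) : BddAbove K :=
  _root_.bddAbove_pi.2 fun m ↦ (hK.image (continuous_apply m)).bddAbove

theorem IsSigmaCompact.exists_forall_evLE {S : Set (ℕ → ℕ)} (hS : IsSigmaCompact S) :
    ∃ g, ∀ f ∈ S, EvLE f g := by
  obtain ⟨K, hK, rfl⟩ := hS
  choose b hb using fun n ↦ (hK n).bddAbove_pi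
  refine ⟨fun m ↦ (Finset.range (m + 1)).sup fun n ↦ b n m, fun f hf ↦ ?_⟩
  obtain ⟨n, hfn⟩ := mem_iUnion.1 hf
  filter_upwards [eventually_ge_atTop n] with m hm
  calc f m ≤ b n m := hb n hfn m
    _ ≤ _ := Finset.le_sup (f := fun n ↦ b n m) (Finset.mem_range.2 (Nat.lt_succ_of_le hm))

theorem stmt19_general (ι : Type)
    (f : ι → ℕ → ℕ)
    (hunb : ∀ g : ℕ → ℕ, ∃ α, ¬ EvLE (f α) g)
    (h : (ℕ → ℕ) ≃ₜ {x : Set.Icc (0 : ℝ) 1 // Irrational (x : ℝ)})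
    (F : Set (Set.Icc (0 : ℝ) 1)) (hF : IsFsigma F)
    (hAF : {x : Set.Icc (0 : ℝ) 1 | ∃ α, x = ↑(h (f α))} ⊆ F) :
    ∃ q ∈ F, ¬ Irrational (q : ℝ) := by
  by_contra! hirr
  have hemb : Topology.IsEmbedding (Subtype.val ∘ h) :=
    Topology.IsEmbedding.subtypeVal.comp h.isEmbedding
  have hFrange : F ⊆ range (Subtype.val ∘ h) := fun q hq ↦
    ⟨h.symm ⟨q, hirr q hq⟩, by simp⟩
  obtain ⟨g, hg⟩ := (hF.isSigmaCompact.preimage_of_subset_range hemb hFrange).exists_forall_evLE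
  obtain ⟨α, hα⟩ := hunb g
  exact hα (hg (f α) (hAF ⟨α, rfl⟩))

theorem stmt19 (ι : Type) [LinearOrder ι] [WellFoundedLT ι]
    (hι : Cardinal.mk ι = bNum)
    (f : ι → ℕ → ℕ)
    (hmono : ∀ α β : ι, α < β → EvLE (f α) (f β) ∧ ¬ EvLE (f β) (f α))
    (hunb : ∀ g : ℕ → ℕ, ∃ α, ¬ EvLE (f α) g)
    (h : (ℕ → ℕ) ≃ₜ {x : Set.Icc (0 : ℝ) 1 // Irrational (x : ℝ)})
    (F : Set (Set.Icc (0 : ℝ) 1)) (hF : IsFsigma F)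
    (hAF : {x : Set.Icc (0 : ℝ) 1 | ∃ α, x = ↑(h (f α))} ⊆ F) :
    ∃ q ∈ F, ¬ Irrational (q : ℝ) :=
  stmt19_general ι f hunb h F hF hAF
end
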